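/- arXiv:2406.10648 — 9 statements merged into one kernel-verified Lean document; each statement's English description precedes it below -/
import Mathlib

section
/- Let d ≥ 2 and p_1, …, p_d ∈ (0,1). Let U_{0,1}, …, U_{0,d}, U_{1,1}, …, U_{1,d} be i.i.d. random variables uniformly distributed on [0,1], and let I = (I_1, …, I_d) be a {0,1}^d-valued random vector with P(I_j = 1) = p_j for every j, independent of all the uniform variables. Then for every u = (u_1, …, u_d) ∈ [0,1]^d, P(U_{0,1}^{1−p_1} U_{1,1}^{I_1} ≤ u_1, …, U_{0,d}^{1−p_d} U_{1,d}^{I_d} ≤ u_d) = (∏_{m=1}^d u_m) · (1 + Σ_{A ⊆ {1,…,d}, |A| ≥ 2} ν_A ∏_{j∈A} (1 − u_j^{p_j/(1−p_j)})), where ν_A = E[∏_{j∈A} (I_j − p_j)/p_j]. -/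
open MeasureTheory ProbabilityTheory

noncomputable section GFGMAux
open Set

private def nu : Measure ℝ := volume.restrict (Set.Icc (0:ℝ) 1)

private lemma nu_eq_ioc : nu = volume.restrict (Set.Ioc (0:ℝ) 1) :=
  (Measure.restrict_congr_set Ioc_ae_eq_Icc).symm

instance nu_prob : IsProbabilityMeasure nu :=
  ⟨by simp [nu, Real.volume_Icc]⟩

private lemma nu_oneD {q u : ℝ} (hq : 0 < q) (hu : u ∈ Set.Icc (0:ℝ) 1) :
    nu {x : ℝ | x ^ q ≤ u} = ENNReal.ofReal (u ^ (1/q)) := by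
  rw [nu_eq_ioc, Measure.restrict_apply' measurableSet_Ioc]
  have hset : {x : ℝ | x ^ q ≤ u} ∩ Set.Ioc 0 1 = Set.Ioc 0 (u ^ (1/q)) := by
    ext x
    simp only [Set.mem_inter_iff, Set.mem_setOf_eq, Set.mem_Ioc]
    constructor
    · rintro ⟨hxu, hx0, hx1⟩
      refine ⟨hx0, ?_⟩
      have h1 : (x ^ q) ^ (1/q) ≤ u ^ (1/q) :=
        Real.rpow_le_rpow (Real.rpow_nonneg hx0.le _) hxu (by positivity)
      rwa [← Real.rpow_mul hx0.le, mul_one_div_cancel hq.ne', Real.rpow_one] at h1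
    · rintro ⟨hx0, hxa⟩
      have h1 : x ^ q ≤ (u ^ (1/q)) ^ q := Real.rpow_le_rpow hx0.le hxa hq.le
      rw [← Real.rpow_mul hu.1, one_div_mul_cancel hq.ne', Real.rpow_one] at h1
      exact ⟨h1, hx0, hxa.trans (Real.rpow_le_one hu.1 hu.2 (by positivity))⟩
  rw [hset, Real.volume_Ioc, sub_zero]

private lemma nu_twoD {p u : ℝ} (hp : p ∈ Set.Ioo (0:ℝ) 1) (hu : u ∈ Set.Icc (0:ℝ) 1) :
    (nu.prod nu) {z : ℝ × ℝ | z.1 ^ (1-p) * z.2 ≤ u}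
      = ENNReal.ofReal (u * (1 + ((1 - p)/p) * (1 - u ^ (p/(1-p))))) := by
  have hq0 : 0 < 1 - p := by linarith [hp.2]
  set q : ℝ := 1 - p with hqdef
  set f : ℝ → ℝ := fun x => min (u / x ^ q) 1 with hfdef
  set a : ℝ := u ^ (1/q) with hadef
  have ha0 : 0 ≤ a := Real.rpow_nonneg hu.1 _
  have ha1 : a ≤ 1 := Real.rpow_le_one hu.1 hu.2 (by positivity)
  have haq : a ^ q = u := by
    rw [hadef, ← Real.rpow_mul hu.1, one_div_mul_cancel hq0.ne', Real.rpow_one]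
  have hS : MeasurableSet {z : ℝ × ℝ | z.1 ^ q * z.2 ≤ u} :=
    measurableSet_le
      (((Real.continuous_rpow_const hq0.le).measurable.comp measurable_fst).mul measurable_snd)
      measurable_const
  have hmeas : Measurable f :=
    (measurable_const.div (Real.continuous_rpow_const hq0.le).measurable).min measurable_const
  have hslice : ∀ x ∈ Set.Ioc (0:ℝ) 1,
      (volume.restrict (Set.Ioc (0:ℝ) 1)) (Prod.mk x ⁻¹' {z : ℝ × ℝ | z.1 ^ q * z.2 ≤ u})
        = ENNReal.ofReal (f x) := by
    intro x hx
    have hxq : 0 < x ^ q := Real.rpow_pos_of_pos hx.1 _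
    have h1 : Prod.mk x ⁻¹' {z : ℝ × ℝ | z.1 ^ q * z.2 ≤ u} = Set.Iic (u / x ^ q) := by
      ext y
      rw [Set.mem_preimage, Set.mem_setOf_eq, Set.mem_Iic, le_div_iff₀ hxq, mul_comm]
    have h2 : Set.Iic (u / x ^ q) ∩ Set.Ioc 0 1 = Set.Ioc 0 (f x) := by
      ext y
      simp only [Set.mem_inter_iff, Set.mem_Iic, Set.mem_Ioc, hfdef, le_min_iff]
      tauto
    rw [h1, Measure.restrict_apply' measurableSet_Ioc, h2, Real.volume_Ioc, sub_zero]
  have hpos : 0 ≤ᵐ[volume.restrict (Set.Ioc (0:ℝ) 1)] f := by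
    refine (ae_restrict_iff' measurableSet_Ioc).2 (ae_of_all _ fun x hx => ?_)
    exact le_min (div_nonneg hu.1 (Real.rpow_pos_of_pos hx.1 q).le) zero_le_one
  have hint : Integrable f (volume.restrict (Set.Ioc (0:ℝ) 1)) := by
    refine Integrable.mono' (integrable_const 1) hmeas.aestronglyMeasurable ?_
    refine (ae_restrict_iff' measurableSet_Ioc).2 (ae_of_all _ fun x hx => ?_)
    rw [Real.norm_eq_abs, abs_le]
    constructor
    · have := le_min (div_nonneg hu.1 (Real.rpow_pos_of_pos hx.1 q).le) (zero_le_one (α := ℝ))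
      linarith
    · exact min_le_right _ _
  have II1 : IntervalIntegrable f volume 0 a :=
    (intervalIntegrable_iff_integrableOn_Ioc_of_le ha0).2
      (IntegrableOn.mono_set hint (Set.Ioc_subset_Ioc le_rfl ha1))
  have II2 : IntervalIntegrable f volume a 1 :=
    (intervalIntegrable_iff_integrableOn_Ioc_of_le ha1).2
      (IntegrableOn.mono_set hint (Set.Ioc_subset_Ioc ha0 le_rfl))
  have h1 : ∫ x in (0:ℝ)..a, f x = a := by
    rw [intervalIntegral.integral_congr_ae (g := fun _ => (1:ℝ))
      (ae_of_all _ fun x hx => ?_), intervalIntegral.integral_const, smul_eq_mul,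
      sub_zero, mul_one]
    rw [Set.uIoc_of_le ha0] at hx
    have hxq : 0 < x ^ q := Real.rpow_pos_of_pos hx.1 _
    have hxu : x ^ q ≤ u := haq ▸ Real.rpow_le_rpow hx.1.le hx.2 hq0.le
    exact min_eq_right ((one_le_div hxq).2 hxu)
  have h2 : ∫ x in a..(1:ℝ), f x = u * ((1 - a ^ p)/p) := by
    rw [intervalIntegral.integral_congr_ae (g := fun x => u * x ^ (-q))
      (ae_of_all _ fun x hx => ?_)]
    · rw [intervalIntegral.integral_const_mul,
        integral_rpow (Or.inl (by linarith [hp.1] : (-1:ℝ) < -q))]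
      have hqp : -q + 1 = p := by rw [hqdef]; ring
      rw [hqp, Real.one_rpow]
    · rw [Set.uIoc_of_le ha1] at hx
      have hx0 : 0 < x := lt_of_le_of_lt ha0 hx.1
      have hxq : 0 < x ^ q := Real.rpow_pos_of_pos hx0 _
      have hux : u ≤ x ^ q := haq ▸ Real.rpow_le_rpow ha0 hx.1.le hq0.le
      rw [hfdef]
      simp only
      rw [min_eq_left ((div_le_one hxq).2 hux), Real.rpow_neg hx0.le, div_eq_mul_inv]
  calc (nu.prod nu) {z : ℝ × ℝ | z.1 ^ q * z.2 ≤ u}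
      = ∫⁻ x, (volume.restrict (Set.Ioc (0:ℝ) 1))
          (Prod.mk x ⁻¹' {z : ℝ × ℝ | z.1 ^ q * z.2 ≤ u}) ∂(volume.restrict (Set.Ioc (0:ℝ) 1)) := by
        rw [nu_eq_ioc, Measure.prod_apply hS]
    _ = ∫⁻ x in Set.Ioc (0:ℝ) 1, ENNReal.ofReal (f x) :=
        setLIntegral_congr_fun measurableSet_Ioc hslice
    _ = ENNReal.ofReal (∫ x in Set.Ioc (0:ℝ) 1, f x) :=
        (ofReal_integral_eq_lintegral_ofReal hint hpos).symm
    _ = ENNReal.ofReal (∫ x in (0:ℝ)..1, f x) := by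
        rw [intervalIntegral.integral_of_le zero_le_one]
    _ = ENNReal.ofReal (a + u * ((1 - a ^ p)/p)) := by
        rw [← intervalIntegral.integral_add_adjacent_intervals II1 II2, h1, h2]
    _ = ENNReal.ofReal (u * (1 + ((1 - p)/p) * (1 - u ^ (p/(1-p))))) := by
        congr 1
        have hap : a ^ p = u ^ (p/(1-p)) := by
          rw [hadef, ← Real.rpow_mul hu.1]
          congr 1
          rw [hqdef]; ring
        rcases eq_or_lt_of_le hu.1 with h0 | h0
        · rw [hadef, ← h0, Real.zero_rpow (by positivity)]
          ring
        · have hA : a = u * u ^ (p/(1-p)) := by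
            rw [hadef, show (1:ℝ)/q = 1 + p/(1-p) by rw [hqdef, one_add_div (by linarith [hp.2] : (1:ℝ) - p ≠ 0)]; ring,
              Real.rpow_add h0, Real.rpow_one]
          rw [hap, hA]
          generalize u ^ (p/(1-p)) = A
          have hp0 : p ≠ 0 := ne_of_gt hp.1
          field_simp
          ring

private lemma G_nonneg {p u : ℝ} (hp : p ∈ Set.Ioo (0:ℝ) 1) (hu : u ∈ Set.Icc (0:ℝ) 1)
    (b : Bool) :
    0 ≤ u * (1 + (((if b then (1:ℝ) else 0) - p)/p) * (1 - u ^ (p/(1-p)))) := by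
  have hq0 : 0 < 1 - p := by linarith [hp.2]
  have hA0 : 0 ≤ u ^ (p/(1-p)) := Real.rpow_nonneg hu.1 _
  have hA1 : u ^ (p/(1-p)) ≤ 1 :=
    Real.rpow_le_one hu.1 hu.2 (div_nonneg hp.1.le hq0.le)
  cases b with
  | false =>
    rw [if_neg (by decide)]
    have : 1 + ((0 - p)/p) * (1 - u ^ (p/(1-p))) = u ^ (p/(1-p)) := by
      have hp0 : p ≠ 0 := ne_of_gt hp.1
      field_simp
      ring
    rw [this]
    exact mul_nonneg hu.1 hA0
  | true =>
    rw [if_pos rfl]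
    have h1 : 0 ≤ ((1:ℝ) - p)/p := div_nonneg hq0.le hp.1.le
    have := mul_nonneg h1 (by linarith : (0:ℝ) ≤ 1 - u ^ (p/(1-p)))
    apply mul_nonneg hu.1
    linarith

private lemma Gval {p u : ℝ} (hp : p ∈ Set.Ioo (0:ℝ) 1) (hu : u ∈ Set.Icc (0:ℝ) 1)
    (b : Bool) :
    (nu.prod nu) {z : ℝ × ℝ | z.1 ^ (1-p) * (if b then z.2 else 1) ≤ u}
      = ENNReal.ofReal (u * (1 + (((if b then (1:ℝ) else 0) - p)/p) * (1 - u ^ (p/(1-p))))) := by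
  have hq0 : 0 < 1 - p := by linarith [hp.2]
  cases b with
  | true =>
    rw [if_pos rfl]
    simpa using nu_twoD hp hu
  | false =>
    simp only [if_neg Bool.false_ne_true, mul_one]
    have hset : {z : ℝ × ℝ | z.1 ^ (1-p) ≤ u} = {x : ℝ | x ^ (1-p) ≤ u} ×ˢ (Set.univ : Set ℝ) := by
      ext z; simp
    rw [hset, Measure.prod_prod, measure_univ, mul_one, nu_oneD hq0 hu]
    congr 1
    have : 1 + ((0 - p)/p) * (1 - u ^ (p/(1-p))) = u ^ (p/(1-p)) := by
      have hp0 : p ≠ 0 := ne_of_gt hp.1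
      field_simp
      ring
    rw [this]
    rcases eq_or_lt_of_le hu.1 with h0 | h0
    · rw [← h0, Real.zero_rpow (one_div_ne_zero hq0.ne'),
        Real.zero_rpow (div_ne_zero hp.1.ne' hq0.ne'), zero_mul]
    · rw [show (1:ℝ)/(1-p) = 1 + p/(1-p) by rw [one_add_div hq0.ne']; ring, Real.rpow_add h0, Real.rpow_one]

private lemma map_joint {Ω : Type*} [MeasurableSpace Ω] (μ : Measure Ω) [IsProbabilityMeasure μ]
    {ι : Type*} [Fintype ι] (U : ι → Ω → ℝ) (hUm : ∀ i, Measurable (U i))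
    (hUunif : ∀ i, Measure.map (U i) μ = volume.restrict (Set.Icc (0 : ℝ) 1))
    (hUindep : iIndepFun U μ) :
    Measure.map (fun ω i => U i ω) μ = Measure.pi (fun _ => nu) := by
  refine (Measure.pi_eq fun s hs => ?_).symm
  rw [Measure.map_apply (measurable_pi_lambda _ hUm) (MeasurableSet.univ_pi hs)]
  have hpre : (fun ω i => U i ω) ⁻¹' (Set.univ.pi s) = ⋂ i, U i ⁻¹' s i := by
    ext ω; simp [Set.mem_pi]
  rw [hpre, hUindep.meas_iInter fun i => ⟨s i, hs i, rfl⟩]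
  exact Finset.prod_congr rfl fun i _ => by
    rw [← Measure.map_apply (hUm i) (hs i), hUunif i]; rfl

private lemma pi_boolfin (d : ℕ) (T : Fin d → Set (ℝ × ℝ)) (hT : ∀ j, MeasurableSet (T j)) :
    Measure.pi (fun _ : Bool × Fin d => nu) {g | ∀ j, (g (false, j), g (true, j)) ∈ T j}
      = ∏ j, (nu.prod nu) (T j) := by
  have hpres : MeasurePreserving
      ((MeasurableEquiv.piCongrLeft (fun _ : Bool × Fin d => ℝ)
          (Equiv.boolProdEquivSum (Fin d)).symm).symm.trans
        ((MeasurableEquiv.sumPiEquivProdPi (fun _ => ℝ)).trans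
          (MeasurableEquiv.arrowProdEquivProdArrow ℝ ℝ (Fin d)).symm))
      (Measure.pi (fun _ : Bool × Fin d => nu)) (Measure.pi (fun _ : Fin d => nu.prod nu)) := by
    refine MeasurePreserving.trans
      (μb := Measure.pi (fun _ : Fin d ⊕ Fin d => nu)) ?_ ?_
    · exact (measurePreserving_piCongrLeft (fun _ : Bool × Fin d => nu)
        (Equiv.boolProdEquivSum (Fin d)).symm).symm _
    · refine MeasurePreserving.trans
        (μb := (Measure.pi fun _ : Fin d => nu).prod (Measure.pi fun _ : Fin d => nu))
        (measurePreserving_sumPiEquivProdPi (fun _ => nu)) ?_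
      exact (measurePreserving_arrowProdEquivProdArrow ℝ ℝ (Fin d)
        (fun _ => nu) (fun _ => nu)).symm _
  have hset : {g : Bool × Fin d → ℝ | ∀ j, (g (false, j), g (true, j)) ∈ T j}
      = ((MeasurableEquiv.piCongrLeft (fun _ : Bool × Fin d => ℝ)
          (Equiv.boolProdEquivSum (Fin d)).symm).symm.trans
        ((MeasurableEquiv.sumPiEquivProdPi (fun _ => ℝ)).trans
          (MeasurableEquiv.arrowProdEquivProdArrow ℝ ℝ (Fin d)).symm)) ⁻¹' (Set.univ.pi T) := by
    ext g
    simp only [Set.mem_preimage, Set.mem_pi, Set.mem_univ, forall_true_left, Set.mem_setOf_eq]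
    rfl
  rw [hset, hpres.measure_preimage (MeasurableSet.univ_pi hT).nullMeasurableSet, Measure.pi_pi]

private def Tset (d : ℕ) (p u : Fin d → ℝ) (b : Fin d → Bool) (j : Fin d) : Set (ℝ × ℝ) :=
  {z : ℝ × ℝ | z.1 ^ (1 - p j) * (if b j then z.2 else 1) ≤ u j}

private def Sset (d : ℕ) (p u : Fin d → ℝ) (b : Fin d → Bool) : Set (Bool × Fin d → ℝ) :=
  {h | ∀ j, (h (false, j), h (true, j)) ∈ Tset d p u b j}

private def xfac {d : ℕ} (p : Fin d → ℝ) (c : Bool) (j : Fin d) : ℝ :=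
  ((if c then (1:ℝ) else 0) - p j) / p j

private def Gr {d : ℕ} (p u : Fin d → ℝ) (c : Bool) (j : Fin d) : ℝ :=
  u j * (1 + xfac p c j * (1 - u j ^ (p j / (1 - p j))))

private lemma Tset_meas (d : ℕ) (p u : Fin d → ℝ) (hp : ∀ j, p j ∈ Set.Ioo (0:ℝ) 1)
    (b : Fin d → Bool) (j : Fin d) : MeasurableSet (Tset d p u b j) := by
  have hq : (0:ℝ) ≤ 1 - p j := by linarith [(hp j).2]
  cases hbj : b j with
  | false =>
    simp only [Tset, hbj, if_neg Bool.false_ne_true, mul_one]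
    exact measurableSet_le ((Real.continuous_rpow_const hq).measurable.comp measurable_fst)
      measurable_const
  | true =>
    simp only [Tset, hbj, if_pos rfl]
    exact measurableSet_le
      (((Real.continuous_rpow_const hq).measurable.comp measurable_fst).mul measurable_snd)
      measurable_const

private lemma Sset_meas (d : ℕ) (p u : Fin d → ℝ) (hp : ∀ j, p j ∈ Set.Ioo (0:ℝ) 1)
    (b : Fin d → Bool) : MeasurableSet (Sset d p u b) := by
  have : Sset d p u b
      = ⋂ j, (fun h : Bool × Fin d → ℝ => (h (false, j), h (true, j))) ⁻¹' Tset d p u b j := by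
    ext h; simp [Sset]
  rw [this]
  exact MeasurableSet.iInter fun j =>
    ((measurable_pi_apply _).prodMk (measurable_pi_apply _)) (Tset_meas d p u hp b j)

end GFGMAux

/-- joint cdf of the GFGM stochastic representation
`U_j = U_{0,j}^(1-p_j) * U_{1,j}^(I_j)` is the GFGM copula with parameters `(p_1,…,p_d)`. -/
theorem gfgm_copula_cdf
    {Ω : Type*} [MeasurableSpace Ω] (μ : Measure Ω) [IsProbabilityMeasure μ]
    (d : ℕ) (hd : 2 ≤ d) (p : Fin d → ℝ) (hp : ∀ j, p j ∈ Set.Ioo (0 : ℝ) 1)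
    -- `U (false, j) = U_{0,j}` and `U (true, j) = U_{1,j}`; they are i.i.d. uniform on [0,1]
    (U : Bool × Fin d → Ω → ℝ) (hUm : ∀ i, Measurable (U i))
    (hUunif : ∀ i, Measure.map (U i) μ = volume.restrict (Set.Icc (0 : ℝ) 1))
    (hUindep : iIndepFun U μ)
    (I : Ω → Fin d → Bool) (hIm : Measurable I)
    (hIp : ∀ j, μ {ω | I ω j = true} = ENNReal.ofReal (p j))
    (hUI : IndepFun (fun ω => fun i => U i ω) I μ)
    (u : Fin d → ℝ) (hu : ∀ j, u j ∈ Set.Icc (0 : ℝ) 1) :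
    (μ {ω | ∀ j, U (false, j) ω ^ (1 - p j) * (if I ω j then U (true, j) ω else 1) ≤ u j}).toReal
      = (∏ m, u m) *
        (1 + ∑ A ∈ Finset.univ.powerset.filter (fun A : Finset (Fin d) => 2 ≤ A.card),
          (∫ ω, ∏ j ∈ A, (((if I ω j then (1 : ℝ) else 0) - p j) / p j) ∂μ) *
            ∏ j ∈ A, (1 - u j ^ (p j / (1 - p j)))) := by
    classical
  haveI : Nonempty (Fin d) := ⟨⟨0, by omega⟩⟩
  set P : (Fin d → Bool) → ℝ := fun b => (μ (I ⁻¹' {b})).toReal with hPdef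
  have hjm : Measurable (fun ω (i : Bool × Fin d) => U i ω) := measurable_pi_lambda _ hUm
  have hSm : ∀ b, MeasurableSet (Sset d p u b) := Sset_meas d p u hp
  have hImb : ∀ b : Fin d → Bool, MeasurableSet (I ⁻¹' {b}) :=
    fun b => hIm (measurableSet_singleton b)
  -- Step 1: decompose the event according to the value of I
  have hE : {ω | ∀ j, U (false, j) ω ^ (1 - p j) * (if I ω j then U (true, j) ω else 1) ≤ u j}
      = ⋃ b : Fin d → Bool,
          ((fun ω (i : Bool × Fin d) => U i ω) ⁻¹' Sset d p u b ∩ I ⁻¹' {b}) := by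
    ext ω
    simp only [Set.mem_setOf_eq, Set.mem_iUnion, Set.mem_inter_iff, Set.mem_preimage,
      Set.mem_singleton_iff, Sset, Tset]
    constructor
    · intro h
      exact ⟨I ω, fun j => h j, rfl⟩
    · rintro ⟨b, hb, rfl⟩
      exact fun j => hb j
  have hdisj : Pairwise (Function.onFun Disjoint
      (fun b : Fin d → Bool =>
        (fun ω (i : Bool × Fin d) => U i ω) ⁻¹' Sset d p u b ∩ I ⁻¹' {b})) := by
    intro b b' hne
    refine Set.disjoint_left.2 ?_
    rintro ω ⟨-, h1⟩ ⟨-, h2⟩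
    exact hne ((Set.mem_singleton_iff.1 h1).symm.trans (Set.mem_singleton_iff.1 h2))
  have hmeassets : ∀ b : Fin d → Bool,
      MeasurableSet ((fun ω (i : Bool × Fin d) => U i ω) ⁻¹' Sset d p u b ∩ I ⁻¹' {b}) :=
    fun b => (hjm (hSm b)).inter (hImb b)
  -- Step 2: per-b factorization
  have hmeasb : ∀ b : Fin d → Bool,
      μ ((fun ω (i : Bool × Fin d) => U i ω) ⁻¹' Sset d p u b ∩ I ⁻¹' {b})
        = (∏ j, ENNReal.ofReal (Gr p u (b j) j)) * μ (I ⁻¹' {b}) := by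
    intro b
    rw [hUI.measure_inter_preimage_eq_mul _ _ (hSm b) (measurableSet_singleton b)]
    congr 1
    rw [← Measure.map_apply hjm (hSm b),
      map_joint μ U hUm hUunif hUindep]
    have : (Measure.pi fun _ : Bool × Fin d => nu) (Sset d p u b)
        = ∏ j, (nu.prod nu) (Tset d p u b j) := pi_boolfin d _ (Tset_meas d p u hp b)
    rw [this]
    exact Finset.prod_congr rfl fun j _ => Gval (hp j) (hu j) (b j)
  -- Step 3: take toReal
  have hLHS : (μ {ω | ∀ j, U (false, j) ω ^ (1 - p j)
        * (if I ω j then U (true, j) ω else 1) ≤ u j}).toReal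
      = ∑ b : Fin d → Bool, (∏ j, Gr p u (b j) j) * P b := by
    rw [hE, measure_iUnion hdisj hmeassets, tsum_fintype,
      Finset.sum_congr rfl (fun b _ => hmeasb b),
      ENNReal.toReal_sum (fun b _ => ENNReal.mul_ne_top
        (ENNReal.prod_ne_top fun j _ => ENNReal.ofReal_ne_top) (measure_ne_top μ _))]
    refine Finset.sum_congr rfl fun b _ => ?_
    rw [ENNReal.toReal_mul, ENNReal.toReal_prod]
    congr 1
    exact Finset.prod_congr rfl fun j _ =>
      ENNReal.toReal_ofReal (G_nonneg (hp j) (hu j) (b j))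
  -- Step 4: integral identity
  have hint_eq : ∀ A : Finset (Fin d),
      (∫ ω, ∏ j ∈ A, (((if I ω j then (1 : ℝ) else 0) - p j) / p j) ∂μ)
        = ∑ b : Fin d → Bool, P b * ∏ j ∈ A, xfac p (b j) j := by
    intro A
    have hφ : Measurable (fun c : Fin d → Bool => ∏ j ∈ A, xfac p (c j) j) :=
      measurable_of_countable _
    haveI : IsProbabilityMeasure (Measure.map I μ) :=
      Measure.isProbabilityMeasure_map hIm.aemeasurable
    have h1 : ∫ c, (∏ j ∈ A, xfac p (c j) j) ∂(Measure.map I μ)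
        = ∫ ω, ∏ j ∈ A, xfac p (I ω j) j ∂μ :=
      integral_map hIm.aemeasurable hφ.aestronglyMeasurable
    have h2 : ∫ c, (∏ j ∈ A, xfac p (c j) j) ∂(Measure.map I μ)
        = ∑ b : Fin d → Bool, P b * ∏ j ∈ A, xfac p (b j) j := by
      rw [integral_fintype .of_finite]
      refine Finset.sum_congr rfl fun b _ => ?_
      rw [measureReal_def, Measure.map_apply hIm (measurableSet_singleton b), smul_eq_mul]
    rw [← h2, h1]
    rfl
  -- Step 5: values at ∅ and singletons
  have h_empty : ∑ b : Fin d → Bool, P b * ∏ j ∈ (∅ : Finset (Fin d)), xfac p (b j) j = 1 := by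
    rw [← hint_eq ∅]
    simp
  have h_single : ∀ j : Fin d,
      ∑ b : Fin d → Bool, P b * ∏ j' ∈ ({j} : Finset (Fin d)), xfac p (b j') j' = 0 := by
    intro j
    rw [← hint_eq {j}]
    simp only [Finset.prod_singleton]
    have hs : MeasurableSet {ω | I ω j = true} :=
      ((measurable_pi_apply j).comp hIm) (measurableSet_singleton true)
    have hind : (fun ω => (if I ω j then (1:ℝ) else 0))
        = Set.indicator {ω | I ω j = true} (fun _ => (1:ℝ)) := by
      funext ω
      rw [Set.indicator_apply]
      rfl
    have hintg : Integrable (fun ω => (if I ω j then (1:ℝ) else 0)) μ := by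
      rw [hind]; exact (integrable_const (1:ℝ)).indicator hs
    rw [integral_div, integral_sub hintg (integrable_const _), integral_const]
    rw [hind, integral_indicator_const _ hs, measureReal_def, hIp j,
      ENNReal.toReal_ofReal (hp j).1.le]
    simp
  -- Step 6: main algebraic rearrangement
  have halg : ∑ b : Fin d → Bool, (∏ j, Gr p u (b j) j) * P b
      = (∏ m, u m) * ∑ A ∈ Finset.univ.powerset,
          (∑ b : Fin d → Bool, P b * ∏ j ∈ A, xfac p (b j) j)
            * ∏ j ∈ A, (1 - u j ^ (p j / (1 - p j))) := by
    have hGr : ∀ b : Fin d → Bool, ∏ j, Gr p u (b j) j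
        = (∏ m, u m) * ∑ A ∈ Finset.univ.powerset,
            (∏ j ∈ A, xfac p (b j) j) * ∏ j ∈ A, (1 - u j ^ (p j / (1 - p j))) := by
      intro b
      have h1 : ∏ j, Gr p u (b j) j
          = (∏ m, u m) * ∏ j, (xfac p (b j) j * (1 - u j ^ (p j / (1 - p j))) + 1) := by
        rw [← Finset.prod_mul_distrib]
        exact Finset.prod_congr rfl fun j _ => by rw [Gr]; ring
      rw [h1, Finset.prod_add]
      congr 1
      refine Finset.sum_congr rfl fun A _ => ?_
      rw [Finset.prod_const_one, mul_one, Finset.prod_mul_distrib]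
    calc ∑ b : Fin d → Bool, (∏ j, Gr p u (b j) j) * P b
        = ∑ b : Fin d → Bool, ∑ A ∈ Finset.univ.powerset,
            (∏ m, u m) * ((∏ j ∈ A, xfac p (b j) j)
              * (∏ j ∈ A, (1 - u j ^ (p j / (1 - p j)))) * P b) := by
          refine Finset.sum_congr rfl fun b _ => ?_
          rw [hGr b, Finset.mul_sum, Finset.sum_mul]
          exact Finset.sum_congr rfl fun A _ => by ring
      _ = ∑ A ∈ Finset.univ.powerset, ∑ b : Fin d → Bool,
            (∏ m, u m) * ((∏ j ∈ A, xfac p (b j) j)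
              * (∏ j ∈ A, (1 - u j ^ (p j / (1 - p j)))) * P b) := Finset.sum_comm
      _ = (∏ m, u m) * ∑ A ∈ Finset.univ.powerset,
            (∑ b : Fin d → Bool, P b * ∏ j ∈ A, xfac p (b j) j)
              * ∏ j ∈ A, (1 - u j ^ (p j / (1 - p j))) := by
          rw [Finset.mul_sum]
          refine Finset.sum_congr rfl fun A _ => ?_
          rw [← Finset.mul_sum, Finset.sum_mul]
          congr 1
          exact Finset.sum_congr rfl fun b _ => by ring
  -- Step 7: split the powerset sum
  have hsplit : ∑ A ∈ Finset.univ.powerset,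
        (∑ b : Fin d → Bool, P b * ∏ j ∈ A, xfac p (b j) j)
          * ∏ j ∈ A, (1 - u j ^ (p j / (1 - p j)))
      = 1 + ∑ A ∈ Finset.univ.powerset.filter (fun A : Finset (Fin d) => 2 ≤ A.card),
          (∑ b : Fin d → Bool, P b * ∏ j ∈ A, xfac p (b j) j)
            * ∏ j ∈ A, (1 - u j ^ (p j / (1 - p j))) := by
    rw [← Finset.sum_filter_add_sum_filter_not Finset.univ.powerset
      (fun A : Finset (Fin d) => 2 ≤ A.card), add_comm]
    congr 1
    have hfilter : Finset.univ.powerset.filter (fun A : Finset (Fin d) => ¬ 2 ≤ A.card)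
        = insert (∅ : Finset (Fin d)) (Finset.univ.image fun j : Fin d => ({j} : Finset (Fin d))) := by
      ext A
      simp only [Finset.mem_filter, Finset.mem_powerset, Finset.mem_insert, Finset.mem_image,
        Finset.mem_univ, true_and, not_le]
      constructor
      · rintro ⟨-, hA⟩
        rcases Finset.card_le_one_iff_subset_singleton.1 (by omega : A.card ≤ 1) with ⟨a, ha⟩
        rcases Finset.subset_singleton_iff.1 ha with h | h
        · exact Or.inl h
        · exact Or.inr ⟨a, h.symm⟩
      · rintro (rfl | ⟨a, rfl⟩) <;> simp [Finset.subset_univ]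
    rw [hfilter, Finset.sum_insert (by simp), Finset.sum_image
      (fun x _ y _ h => Finset.singleton_injective h)]
    rw [h_empty, Finset.prod_empty, one_mul]
    rw [Finset.sum_eq_zero fun j _ => by rw [h_single j, zero_mul]]
    ring
  -- Final assembly
  rw [hLHS, halg, hsplit]
  congr 1
  congr 1
  exact Finset.sum_congr rfl fun A _ => by rw [hint_eq A]
end

section
/- Let p ∈ (0,1) and let U_0, U_1 be independent random variables uniformly distributed on [0,1]. Then for every u ∈ [0,1], P(U_0^{1−p} U_1 ≤ u) = u/p − ((1−p)/p) · u^{1/(1−p)}. -/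
open MeasureTheory ProbabilityTheory

/-- For `p ∈ (0,1)` and independent `U₀, U₁` uniform on `[0,1]`,
`P(U₀^(1-p) * U₁ ≤ u) = u/p - ((1-p)/p) * u^(1/(1-p))` for every `u ∈ [0,1]`. -/
theorem gfgm_conditional_cdf
    {Ω : Type*} [MeasurableSpace Ω] (μ : Measure Ω) [IsProbabilityMeasure μ]
    (p : ℝ) (hp : p ∈ Set.Ioo (0 : ℝ) 1)
    (U0 U1 : Ω → ℝ) (hU0m : Measurable U0) (hU1m : Measurable U1)
    (hU0 : Measure.map U0 μ = volume.restrict (Set.Icc (0 : ℝ) 1))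
    (hU1 : Measure.map U1 μ = volume.restrict (Set.Icc (0 : ℝ) 1))
    (hindep : IndepFun U0 U1 μ)
    (u : ℝ) (hu : u ∈ Set.Icc (0 : ℝ) 1) :
    (μ {ω | U0 ω ^ (1 - p) * U1 ω ≤ u}).toReal
      = u / p - ((1 - p) / p) * u ^ (1 / (1 - p)) := by
  obtain ⟨hp0, hp1⟩ := hp
  obtain ⟨hu0, hu1⟩ := hu
  have h1p : (0:ℝ) < 1 - p := by linarith
  set t := u ^ (1 / (1 - p)) with ht
  have ht0 : 0 ≤ t := Real.rpow_nonneg hu0 _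
  have htpow : t ^ (1 - p) = u := by
    rw [ht, ← Real.rpow_mul hu0, one_div_mul_cancel h1p.ne', Real.rpow_one]
  have ht1 : t ≤ 1 := Real.rpow_le_one hu0 hu1 (by positivity)
  have hkey : u * t ^ p = t := by
    rcases eq_or_lt_of_le hu0 with h | h
    · rw [ht, ← h, Real.zero_rpow (by positivity : 1/(1-p) ≠ (0:ℝ))]
      ring
    · have h1 : t ^ p = u ^ (p / (1-p)) := by
        rw [ht, ← Real.rpow_mul hu0]
        congr 1
        ring
      have h2 : (1 : ℝ) + p/(1-p) = 1/(1-p) := by field_simp; ring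
      calc u * t ^ p = u ^ (1:ℝ) * u ^ (p/(1-p)) := by rw [h1, Real.rpow_one]
        _ = u ^ ((1:ℝ) + p/(1-p)) := (Real.rpow_add h _ _).symm
        _ = t := by rw [h2]
  -- abbreviation
  set g : ℝ → ℝ := fun x => min 1 (u * x ^ (p - 1)) with hg
  have hgm : Measurable g := by
    apply measurable_const.min
    exact (measurable_id'.pow measurable_const).const_mul u
  have hg01 : ∀ x ∈ Set.Icc (0:ℝ) 1, 0 ≤ g x ∧ g x ≤ 1 := by
    intro x hx
    refine ⟨le_min zero_le_one (mul_nonneg hu0 (Real.rpow_nonneg hx.1 _)), min_le_left _ _⟩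
  have hgint : IntegrableOn g (Set.Icc (0:ℝ) 1) := by
    apply (integrable_const (1:ℝ)).mono' hgm.aestronglyMeasurable
    filter_upwards [ae_restrict_mem measurableSet_Icc] with x hx
    rw [Real.norm_eq_abs, abs_le]
    exact ⟨by linarith [(hg01 x hx).1], (hg01 x hx).2⟩
  -- the measurable set in the plane
  have hSm : MeasurableSet {q : ℝ × ℝ | q.1 ^ (1 - p) * q.2 ≤ u} :=
    measurableSet_le ((measurable_fst.pow measurable_const).mul measurable_snd) measurable_const
  -- reduce to the product measure
  have hmap : μ.map (fun ω => (U0 ω, U1 ω)) = (μ.map U0).prod (μ.map U1) :=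
    (indepFun_iff_map_prod_eq_prod_map_map hU0m.aemeasurable hU1m.aemeasurable).mp hindep
  have hμS : μ {ω | U0 ω ^ (1 - p) * U1 ω ≤ u}
      = ((volume.restrict (Set.Icc (0:ℝ) 1)).prod (volume.restrict (Set.Icc (0:ℝ) 1)))
          {q : ℝ × ℝ | q.1 ^ (1 - p) * q.2 ≤ u} := by
    have : ((volume.restrict (Set.Icc (0:ℝ) 1)).prod (volume.restrict (Set.Icc (0:ℝ) 1)))
        = (μ.map U0).prod (μ.map U1) := by rw [hU0, hU1]
    rw [this, ← hmap, Measure.map_apply (hU0m.prodMk hU1m) hSm]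
    rfl
  -- inner measure
  have hinner : ∀ x : ℝ, x ∈ Set.Icc (0:ℝ) 1 → x ≠ 0 →
      volume.restrict (Set.Icc (0:ℝ) 1)
        (Prod.mk x ⁻¹' {q : ℝ × ℝ | q.1 ^ (1 - p) * q.2 ≤ u})
      = ENNReal.ofReal (g x) := by
    intro x hx hx0
    have hxpos : 0 < x := lt_of_le_of_ne hx.1 (Ne.symm hx0)
    have hxp : 0 < x ^ (1 - p) := Real.rpow_pos_of_pos hxpos _
    have hc : u / x ^ (1 - p) = u * x ^ (p - 1) := by
      rw [div_eq_mul_inv, ← Real.rpow_neg hxpos.le, neg_sub]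
    have hset : Prod.mk x ⁻¹' {q : ℝ × ℝ | q.1 ^ (1 - p) * q.2 ≤ u}
        = Set.Iic (u / x ^ (1 - p)) := by
      ext y
      simp only [Set.mem_preimage, Set.mem_setOf_eq, Set.mem_Iic]
      rw [le_div_iff₀ hxp]
      constructor <;> intro h <;> linarith [h, mul_comm (x ^ (1-p)) y]
    rw [hset, Measure.restrict_apply measurableSet_Iic]
    have hint : Set.Iic (u / x ^ (1 - p)) ∩ Set.Icc (0:ℝ) 1
        = Set.Icc 0 (min (u / x ^ (1 - p)) 1) := by
      ext y
      simp only [Set.mem_inter_iff, Set.mem_Iic, Set.mem_Icc, le_min_iff]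
      tauto
    rw [hint, Real.volume_Icc, hg, hc, min_comm]
    norm_num
  -- compute the probability as an integral
  have hμS2 : μ {ω | U0 ω ^ (1 - p) * U1 ω ≤ u}
      = ENNReal.ofReal (∫ x in Set.Icc (0:ℝ) 1, g x) := by
    rw [hμS, Measure.prod_apply hSm]
    have hae : ∀ᵐ x ∂(volume.restrict (Set.Icc (0:ℝ) 1)),
        volume.restrict (Set.Icc (0:ℝ) 1)
          (Prod.mk x ⁻¹' {q : ℝ × ℝ | q.1 ^ (1 - p) * q.2 ≤ u})
        = ENNReal.ofReal (g x) := by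
      have hne : ∀ᵐ x ∂(volume.restrict (Set.Icc (0:ℝ) 1)), x ≠ 0 := by
        apply ae_restrict_of_ae
        rw [ae_iff]
        simp [Set.setOf_eq_eq_singleton]
      filter_upwards [ae_restrict_mem measurableSet_Icc, hne] with x hx hx0
      exact hinner x hx hx0
    rw [lintegral_congr_ae hae,
      ← ofReal_integral_eq_lintegral_ofReal hgint]
    filter_upwards [ae_restrict_mem measurableSet_Icc] with x hx
    exact (hg01 x hx).1
  -- compute the integral
  have hJ : ∫ x in Set.Icc (0:ℝ) 1, g x = u / p - ((1 - p) / p) * t := by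
    rw [MeasureTheory.integral_Icc_eq_integral_Ioc]
    have hsplit : Set.Ioc (0:ℝ) 1 = Set.Ioc 0 t ∪ Set.Ioc t 1 :=
      (Set.Ioc_union_Ioc_eq_Ioc ht0 ht1).symm
    have hi1 : IntegrableOn g (Set.Ioc (0:ℝ) t) :=
      hgint.mono_set (Set.Ioc_subset_Icc_self.trans (Set.Icc_subset_Icc_right ht1))
    have hi2 : IntegrableOn g (Set.Ioc t 1) :=
      hgint.mono_set (Set.Ioc_subset_Icc_self.trans (Set.Icc_subset_Icc_left ht0))
    rw [hsplit, setIntegral_union (Set.Ioc_disjoint_Ioc_of_le le_rfl) measurableSet_Ioc hi1 hi2]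
    have hpiece1 : ∫ x in Set.Ioc (0:ℝ) t, g x = t := by
      have hcongr : ∀ x ∈ Set.Ioc (0:ℝ) t, g x = 1 := by
        intro x hx
        have hxpos : 0 < x := hx.1
        have hxle : x ^ (1 - p) ≤ u := by
          rw [← htpow]
          exact Real.rpow_le_rpow hxpos.le hx.2 h1p.le
        have hxp : 0 < x ^ (1 - p) := Real.rpow_pos_of_pos hxpos _
        have h1le : (1:ℝ) ≤ u * x ^ (p - 1) := by
          have hc : u * x ^ (p - 1) = u / x ^ (1 - p) := by
            rw [div_eq_mul_inv, ← Real.rpow_neg hxpos.le, neg_sub]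
          rw [hc, le_div_iff₀ hxp, one_mul]
          exact hxle
        simp [hg, min_eq_left h1le]
      rw [setIntegral_congr_fun measurableSet_Ioc hcongr]
      simp [Real.volume_Ioc, ht0]
    have hpiece2 : ∫ x in Set.Ioc t 1, g x = u * ((1 - t ^ p) / p) := by
      have hcongr : ∫ x in Set.Ioc t 1, g x = ∫ x in Set.Ioc t 1, u * x ^ (p - 1) := by
        apply setIntegral_congr_fun measurableSet_Ioc
        intro x hx
        have hxpos : 0 < x := lt_of_le_of_lt ht0 hx.1
        have hxge : u ≤ x ^ (1 - p) := by
          rw [← htpow]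
          exact Real.rpow_le_rpow ht0 hx.1.le h1p.le
        have hxp : 0 < x ^ (1 - p) := Real.rpow_pos_of_pos hxpos _
        have hle : u * x ^ (p - 1) ≤ 1 := by
          have hc : u * x ^ (p - 1) = u / x ^ (1 - p) := by
            rw [div_eq_mul_inv, ← Real.rpow_neg hxpos.le, neg_sub]
          rw [hc, div_le_one hxp]
          exact hxge
        simp [hg, min_eq_right hle]
      rw [hcongr, ← intervalIntegral.integral_of_le ht1,
        intervalIntegral.integral_const_mul, integral_rpow (Or.inl (by linarith))]
      have : p - 1 + 1 = p := by ring
      rw [this, Real.one_rpow]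
    rw [hpiece1, hpiece2]
    have hp' : p ≠ 0 := hp0.ne'
    field_simp
    nlinarith [hkey]
  rw [hμS2, hJ, ENNReal.toReal_ofReal]
  have : 0 ≤ u / p - ((1-p)/p) * t := by
    rw [← hJ]
    apply setIntegral_nonneg measurableSet_Icc
    intro x hx
    exact (hg01 x hx).1
  linarith [this]
end

section
/- Let p ∈ (0,1), let U_0, U_1 be independent random variables uniformly distributed on [0,1], and let I be a Bernoulli random variable with P(I = 1) = p, independent of (U_0, U_1). Then the random variable U = U_0^{1−p} · U_1^{I} is uniformly distributed on [0,1], i.e. P(U ≤ u) = u for all u ∈ [0,1]. -/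
open MeasureTheory ProbabilityTheory

/-- If `U₀, U₁` are independent uniforms on `[0,1]` and `I` is a Bernoulli(p)
variable independent of `(U₀, U₁)`, then `U = U₀^(1-p) * U₁^I` is uniform on `[0,1]`. -/
theorem gfgm_uniform_margin
    {Ω : Type*} [MeasurableSpace Ω] (μ : Measure Ω) [IsProbabilityMeasure μ]
    (p : ℝ) (hp : p ∈ Set.Ioo (0 : ℝ) 1)
    (U0 U1 : Ω → ℝ) (hU0m : Measurable U0) (hU1m : Measurable U1)
    (hU0 : Measure.map U0 μ = volume.restrict (Set.Icc (0 : ℝ) 1))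
    (hU1 : Measure.map U1 μ = volume.restrict (Set.Icc (0 : ℝ) 1))
    (hU01indep : IndepFun U0 U1 μ)
    (I : Ω → Bool) (hIm : Measurable I)
    (hIp : μ {ω | I ω = true} = ENNReal.ofReal p)
    (hindep : IndepFun (fun ω => (U0 ω, U1 ω)) I μ)
    (u : ℝ) (hu : u ∈ Set.Icc (0 : ℝ) 1) :
    (μ {ω | U0 ω ^ (1 - p) * (if I ω then U1 ω else 1) ≤ u}).toReal = u := by
  obtain ⟨hp0, hp1⟩ := hp
  obtain ⟨hu0, hu1⟩ := hu
  set a : ℝ := 1 - p with ha_def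
  have ha0 : (0:ℝ) < a := by simp only [ha_def]; linarith
  have ha1 : a < 1 := by simp only [ha_def]; linarith
  set t : ℝ := u ^ (1/a) with ht_def
  have ht0 : 0 ≤ t := Real.rpow_nonneg hu0 _
  have hta : t ^ a = u := by
    rw [ht_def, ← Real.rpow_mul hu0, one_div_mul_cancel ha0.ne', Real.rpow_one]
  have h1a : (1:ℝ) ≤ 1/a := by rw [le_div_iff₀ ha0]; linarith
  have ht1 : t ≤ 1 := Real.rpow_le_one hu0 hu1 (by positivity)
  set ν : Measure ℝ := volume.restrict (Set.Icc (0:ℝ) 1) with hν_def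
  -- measurable sets in the plane
  set S0 : Set (ℝ × ℝ) := {z | z.1 ^ a ≤ u} with hS0_def
  set S1 : Set (ℝ × ℝ) := {z | z.1 ^ a * z.2 ≤ u} with hS1_def
  have hm1 : Measurable fun z : ℝ × ℝ => z.1 ^ a := measurable_fst.pow_const a
  have hS0 : MeasurableSet S0 := measurableSet_le hm1 measurable_const
  have hS1 : MeasurableSet S1 := measurableSet_le (hm1.mul measurable_snd) measurable_const
  set pair : Ω → ℝ × ℝ := fun ω => (U0 ω, U1 ω) with hpair_def
  have hpairm : Measurable pair := hU0m.prodMk hU1m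
  -- the event splits according to I
  have hsplit : {ω | U0 ω ^ (1 - p) * (if I ω then U1 ω else 1) ≤ u}
      = (pair ⁻¹' S1 ∩ I ⁻¹' {true}) ∪ (pair ⁻¹' S0 ∩ I ⁻¹' {false}) := by
    ext ω
    cases hIω : I ω <;>
      simp [hIω, S0, S1, pair, ha_def]
  -- independence
  have hIT : MeasurableSet ({true} : Set Bool) := trivial
  have hIF : MeasurableSet ({false} : Set Bool) := trivial
  have hmul1 : μ (pair ⁻¹' S1 ∩ I ⁻¹' {true}) = μ (pair ⁻¹' S1) * ENNReal.ofReal p := by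
    rw [hindep.measure_inter_preimage_eq_mul S1 {true} hS1 hIT]
    have : I ⁻¹' {true} = {ω | I ω = true} := rfl
    rw [this, hIp]
  have hIfalse : μ (I ⁻¹' {false}) = ENNReal.ofReal (1 - p) := by
    have hcompl : I ⁻¹' {false} = (I ⁻¹' {true})ᶜ := by
      ext ω; cases h : I ω <;> simp [h]
    rw [hcompl, measure_compl (hIm hIT) (measure_ne_top μ _)]
    have h2 : I ⁻¹' {true} = {ω | I ω = true} := rfl
    rw [h2, hIp, measure_univ, ← ENNReal.ofReal_one,
      ← ENNReal.ofReal_sub _ hp0.le]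
  have hmul0 : μ (pair ⁻¹' S0 ∩ I ⁻¹' {false}) = μ (pair ⁻¹' S0) * ENNReal.ofReal (1 - p) := by
    rw [hindep.measure_inter_preimage_eq_mul S0 {false} hS0 hIF, hIfalse]
  -- marginal computation for S0
  have hν_Iic : ∀ c : ℝ, 0 ≤ c → ν (Set.Iic c) = ENNReal.ofReal (min c 1) := by
    intro c hc
    rw [hν_def, Measure.restrict_apply measurableSet_Iic]
    have : Set.Iic c ∩ Set.Icc 0 1 = Set.Icc 0 (min c 1) := by
      ext z
      simp only [Set.mem_inter_iff, Set.mem_Iic, Set.mem_Icc, le_min_iff]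
      constructor
      · rintro ⟨h1, h2, h3⟩; exact ⟨h2, h1, h3⟩
      · rintro ⟨h1, h2, h3⟩; exact ⟨h2, h1, h3⟩
    rw [this, Real.volume_Icc, sub_zero]
  have hμS0 : μ (pair ⁻¹' S0) = ENNReal.ofReal t := by
    have hset : pair ⁻¹' S0 = U0 ⁻¹' {x | x ^ a ≤ u} := rfl
    have hmx : MeasurableSet {x : ℝ | x ^ a ≤ u} :=
      measurableSet_le (measurable_id.pow_const a) measurable_const
    rw [hset, ← Measure.map_apply hU0m hmx, hU0,
      Measure.restrict_apply hmx]
    have : {x : ℝ | x ^ a ≤ u} ∩ Set.Icc 0 1 = Set.Icc 0 t := by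
      ext x
      simp only [Set.mem_inter_iff, Set.mem_setOf_eq, Set.mem_Icc]
      constructor
      · rintro ⟨hxa, hx0, hx1⟩
        refine ⟨hx0, ?_⟩
        have h1 : (x ^ a) ^ (1/a) ≤ u ^ (1/a) :=
          Real.rpow_le_rpow (Real.rpow_nonneg hx0 a) hxa (by positivity)
        rwa [← Real.rpow_mul hx0, mul_one_div_cancel ha0.ne', Real.rpow_one] at h1
      · rintro ⟨hx0, hxt⟩
        have hxa : x ^ a ≤ t ^ a := Real.rpow_le_rpow hx0 hxt ha0.le
        exact ⟨hta ▸ hxa, hx0, hxt.trans ht1⟩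
    rw [this, Real.volume_Icc, sub_zero]
  -- joint law is the product measure
  have hmap : μ.map pair = ν.prod ν := by
    have h := (indepFun_iff_map_prod_eq_prod_map_map hU0m.aemeasurable
      hU1m.aemeasurable).mp hU01indep
    rw [hU0, hU1] at h
    exact h
  -- computation for S1
  set g : ℝ → ENNReal := fun x => ENNReal.ofReal (if x ≤ t then 1 else u * x ^ (-a)) with hg_def
  have hμS1 : μ (pair ⁻¹' S1) = ENNReal.ofReal (t + (u - t)/p) := by
    rw [← Measure.map_apply hpairm hS1, hmap, Measure.prod_apply hS1]
    have hae : ∀ᵐ x ∂ν, ν (Prod.mk x ⁻¹' S1) = g x := by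
      have h1 : ∀ᵐ x ∂ν, x ∈ Set.Icc (0:ℝ) 1 := ae_restrict_mem measurableSet_Icc
      have h2 : ∀ᵐ x ∂ν, x ≠ 0 := by
        refine (ae_restrict_iff' measurableSet_Icc).mpr ?_
        have : (volume : Measure ℝ) {0} = 0 := measure_singleton 0
        filter_upwards [measure_eq_zero_iff_ae_notMem.mp this] with x hx _
        simpa using hx
      filter_upwards [h1, h2] with x hx hx0
      have hxpos : 0 < x := lt_of_le_of_ne hx.1 (Ne.symm hx0)
      have hxa : 0 < x ^ a := Real.rpow_pos_of_pos hxpos a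
      have hpre : Prod.mk x ⁻¹' S1 = Set.Iic (u / x ^ a) := by
        ext y
        simp only [Set.mem_preimage, hS1_def, Set.mem_setOf_eq, Set.mem_Iic]
        rw [le_div_iff₀ hxa, mul_comm]
      rw [hpre, hν_Iic _ (by positivity)]
      rcases le_or_gt x t with hxt | hxt
      · have hle : x ^ a ≤ u := by
          have := Real.rpow_le_rpow hxpos.le hxt ha0.le
          rwa [hta] at this
        have h1le : (1:ℝ) ≤ u / x ^ a := (one_le_div hxa).mpr hle
        rw [hg_def]
        simp only [min_eq_right h1le, if_pos hxt]
      · have hlt : u < x ^ a := by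
          have := Real.rpow_lt_rpow ht0 hxt ha0
          rwa [hta] at this
        have hdlt : u / x ^ a < 1 := (div_lt_one hxa).mpr hlt
        rw [hg_def]
        simp only [min_eq_left hdlt.le, if_neg (not_le.mpr hxt)]
        congr 1
        rw [Real.rpow_neg hxpos.le, div_eq_mul_inv]
    rw [lintegral_congr_ae hae]
    -- split the integral
    have hUnion : Set.Icc (0:ℝ) 1 = Set.Icc 0 t ∪ Set.Ioc t 1 := by
      rw [Set.Icc_union_Ioc_eq_Icc ht0 ht1]
    have hdisj : Disjoint (Set.Icc (0:ℝ) t) (Set.Ioc t 1) :=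
      (Set.Iic_disjoint_Ioc le_rfl).mono Set.Icc_subset_Iic_self le_rfl
    rw [hν_def, hUnion, lintegral_union measurableSet_Ioc hdisj]
    have hI1 : ∫⁻ x in Set.Icc (0:ℝ) t, g x = ENNReal.ofReal t := by
      have : ∫⁻ x in Set.Icc (0:ℝ) t, g x = ∫⁻ _ in Set.Icc (0:ℝ) t, (1:ENNReal) := by
        refine setLIntegral_congr_fun measurableSet_Icc (fun x hx => ?_)
        rw [hg_def]
        simp only [if_pos hx.2, ENNReal.ofReal_one]
      rw [this, setLIntegral_const, one_mul, Real.volume_Icc, sub_zero]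
    have hI2 : ∫⁻ x in Set.Ioc t 1, g x = ENNReal.ofReal ((u - t)/p) := by
      have hcg : ∫⁻ x in Set.Ioc t 1, g x
          = ∫⁻ x in Set.Ioc t 1, ENNReal.ofReal (u * x ^ (-a)) := by
        refine setLIntegral_congr_fun measurableSet_Ioc (fun x hx => ?_)
        rw [hg_def]
        simp only [if_neg (not_le.mpr hx.1)]
      have hInt : IntegrableOn (fun x : ℝ => u * x ^ (-a)) (Set.Ioc t 1) volume := by
        have h := (intervalIntegral.intervalIntegrable_rpow' (a := t) (b := 1)
          (r := -a) (by linarith)).const_mul u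
        rw [intervalIntegrable_iff_integrableOn_Ioc_of_le ht1] at h
        exact h
      have hnn : 0 ≤ᵐ[volume.restrict (Set.Ioc t 1)] fun x : ℝ => u * x ^ (-a) := by
        refine (ae_restrict_iff' measurableSet_Ioc).mpr (ae_of_all _ fun x hx => ?_)
        have hx0 : 0 < x := lt_of_le_of_lt ht0 hx.1
        positivity
      rw [hcg, ← ofReal_integral_eq_lintegral_ofReal hInt hnn]
      congr 1
      rw [← intervalIntegral.integral_of_le ht1]
      rw [intervalIntegral.integral_const_mul,
        integral_rpow (Or.inl (by linarith : (-1:ℝ) < -a))]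
      have hna : -a + 1 = p := by rw [ha_def]; ring
      rw [hna, Real.one_rpow]
      have hexp : 1 + 1/a * p = 1/a := by
        have ha' : a + p = 1 := by rw [ha_def]; ring
        field_simp
        linarith
      have htp : u * t ^ p = t := by
        calc u * t ^ p = u * u ^ (1/a * p) := by rw [ht_def, ← Real.rpow_mul hu0]
          _ = u ^ (1 + 1/a * p) := (Real.rpow_one_add' hu0 (by positivity)).symm
          _ = t := by rw [hexp, ht_def]
      rw [← mul_div_assoc, mul_sub, mul_one, htp]
    have hnn2 : (0:ℝ) ≤ (u - t)/p := by
      rcases eq_or_lt_of_le hu0 with h0 | hpos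
      · have ht' : t = 0 := by rw [ht_def, ← h0, Real.zero_rpow (by positivity)]
        rw [ht', ← h0]
        norm_num
      · refine div_nonneg ?_ hp0.le
        have : u ^ (1/a) ≤ u ^ (1:ℝ) :=
          Real.rpow_le_rpow_of_exponent_ge hpos hu1 h1a
        rw [Real.rpow_one] at this
        rw [ht_def]; linarith
    rw [hI1, hI2, ← ENNReal.ofReal_add ht0 hnn2]
  -- put it all together
  have htu : t ≤ u := by
    rcases eq_or_lt_of_le hu0 with h0 | hpos
    · rw [ht_def, ← h0, Real.zero_rpow (by positivity)]
    · rw [ht_def]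
      calc u ^ (1/a) ≤ u ^ (1:ℝ) :=
            Real.rpow_le_rpow_of_exponent_ge hpos hu1 h1a
        _ = u := Real.rpow_one u
  have hnn1 : (0:ℝ) ≤ t + (u - t) / p :=
    add_nonneg ht0 (div_nonneg (by linarith) hp0.le)
  rw [hsplit, measure_union _ ((hpairm hS0).inter (hIm hIF)), hmul1, hmul0, hμS0, hμS1]
  · rw [← ENNReal.ofReal_mul hnn1, ← ENNReal.ofReal_mul ht0,
      ← ENNReal.ofReal_add (by positivity) (by nlinarith), ENNReal.toReal_ofReal]
    · field_simp
      ring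
    · nlinarith
  · exact Set.disjoint_left.mpr fun ω ⟨_, h1⟩ ⟨_, h2⟩ => by
      simp only [Set.mem_preimage, Set.mem_singleton_iff] at h1 h2
      rw [h1] at h2; exact Bool.noConfusion h2
end

section
/- Let Z_{0,1}, Z_{1,1}, Z_{0,2}, Z_{1,2} be integrable real random variables such that the pair (Z_{0,1}, Z_{1,1}) is independent of the pair (Z_{0,2}, Z_{1,2}), and let (I_1, I_2) be a {0,1}^2-valued random vector independent of (Z_{0,1}, Z_{1,1}, Z_{0,2}, Z_{1,2}). Define X_1 = Z_{I_1,1} and X_2 = Z_{I_2,2}, and assume X_1 X_2 is integrable. Then Cov(X_1, X_2) = Cov(I_1, I_2) · (E[Z_{1,1}] − E[Z_{0,1}]) · (E[Z_{1,2}] − E[Z_{0,2}]). -/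
open MeasureTheory ProbabilityTheory

lemma integral_boolInd {Ω : Type*} [MeasurableSpace Ω] (μ : Measure Ω) [IsProbabilityMeasure μ]
    {p : Ω → Prop} [DecidablePred p] (hp : MeasurableSet {ω | p ω}) :
    ∫ ω, (if p ω then (1:ℝ) else 0) ∂μ = (μ {ω | p ω}).toReal := by
  have : (fun ω => if p ω then (1:ℝ) else 0) = Set.indicator {ω | p ω} (fun _ => 1) := by
    ext ω; simp [Set.indicator_apply]
  rw [this, integral_indicator hp]
  simp
  rfl

/-- covariance of a pair under the GFGM stochastic representation
`X_j = Z_{I_j,j}`: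
`Cov(X₁,X₂) = Cov(I₁,I₂) (E[Z_{1,1}] - E[Z_{0,1}]) (E[Z_{1,2}] - E[Z_{0,2}])`. -/
theorem gfgm_covariance
    {Ω : Type*} [MeasurableSpace Ω] (μ : Measure Ω) [IsProbabilityMeasure μ]
    (Z01 Z11 Z02 Z12 : Ω → ℝ)
    (hZ01m : Measurable Z01) (hZ11m : Measurable Z11)
    (hZ02m : Measurable Z02) (hZ12m : Measurable Z12)
    (hZ01 : Integrable Z01 μ) (hZ11 : Integrable Z11 μ)
    (hZ02 : Integrable Z02 μ) (hZ12 : Integrable Z12 μ)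
    (hZindep : IndepFun (fun ω => (Z01 ω, Z11 ω)) (fun ω => (Z02 ω, Z12 ω)) μ)
    (I1 I2 : Ω → Bool) (hI1m : Measurable I1) (hI2m : Measurable I2)
    (hindep : IndepFun (fun ω => (I1 ω, I2 ω))
      (fun ω => (Z01 ω, Z11 ω, Z02 ω, Z12 ω)) μ)
    (hX12int : Integrable
      (fun ω => (if I1 ω then Z11 ω else Z01 ω) * (if I2 ω then Z12 ω else Z02 ω)) μ) :
    (∫ ω, (if I1 ω then Z11 ω else Z01 ω) * (if I2 ω then Z12 ω else Z02 ω) ∂μ)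
        - (∫ ω, (if I1 ω then Z11 ω else Z01 ω) ∂μ)
          * (∫ ω, (if I2 ω then Z12 ω else Z02 ω) ∂μ)
      = ((μ {ω | I1 ω = true ∧ I2 ω = true}).toReal
            - (μ {ω | I1 ω = true}).toReal * (μ {ω | I2 ω = true}).toReal)
        * ((∫ ω, Z11 ω ∂μ) - ∫ ω, Z01 ω ∂μ)
        * ((∫ ω, Z12 ω ∂μ) - ∫ ω, Z02 ω ∂μ) := by
  classical
  -- indicator functions and differences
  set b1 : Ω → ℝ := fun ω => if I1 ω then 1 else 0 with hb1def
  set b2 : Ω → ℝ := fun ω => if I2 ω then 1 else 0 with hb2def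
  set D1 : Ω → ℝ := fun ω => Z11 ω - Z01 ω with hD1def
  set D2 : Ω → ℝ := fun ω => Z12 ω - Z02 ω with hD2def
  have hb1m : Measurable b1 :=
    (Measurable.of_discrete (f := fun b : Bool => if b then (1:ℝ) else 0)).comp hI1m
  have hb2m : Measurable b2 :=
    (Measurable.of_discrete (f := fun b : Bool => if b then (1:ℝ) else 0)).comp hI2m
  have hbb : Measurable fun ω => b1 ω * b2 ω := hb1m.mul hb2m
  have hb1int : Integrable b1 μ := by
    refine (integrable_const (1:ℝ)).mono' hb1m.aestronglyMeasurable ?_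
    refine Filter.Eventually.of_forall fun ω => ?_
    by_cases h : I1 ω <;> simp [hb1def, h]
  have hb2int : Integrable b2 μ := by
    refine (integrable_const (1:ℝ)).mono' hb2m.aestronglyMeasurable ?_
    refine Filter.Eventually.of_forall fun ω => ?_
    by_cases h : I2 ω <;> simp [hb2def, h]
  have hbbint : Integrable (fun ω => b1 ω * b2 ω) μ := by
    refine (integrable_const (1:ℝ)).mono' hbb.aestronglyMeasurable ?_
    refine Filter.Eventually.of_forall fun ω => ?_
    by_cases h : I1 ω <;> by_cases h' : I2 ω <;> simp [hb1def, hb2def, h, h']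
  have hD1int : Integrable D1 μ := hZ11.sub hZ01
  have hD2int : Integrable D2 μ := hZ12.sub hZ02
  have hD1m : Measurable D1 := hZ11m.sub hZ01m
  have hD2m : Measurable D2 := hZ12m.sub hZ02m
  -- independences derived from hZindep
  have iZ12 : IndepFun Z01 Z02 μ :=
    hZindep.comp measurable_fst measurable_fst
  have iD1Z02 : IndepFun D1 Z02 μ :=
    hZindep.comp (measurable_snd.sub measurable_fst) measurable_fst
  have iZ01D2 : IndepFun Z01 D2 μ :=
    hZindep.comp measurable_fst (measurable_snd.sub measurable_fst)
  have iD1D2 : IndepFun D1 D2 μ :=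
    hZindep.comp (measurable_snd.sub measurable_fst) (measurable_snd.sub measurable_fst)
  -- independences derived from hindep
  have ib1D1 : IndepFun b1 D1 μ :=
    hindep.comp (Measurable.of_discrete (f := fun i : Bool × Bool => if i.1 then (1:ℝ) else 0))
      (by fun_prop : Measurable (fun z : ℝ × ℝ × ℝ × ℝ => z.2.1 - z.1))
  have ib2D2 : IndepFun b2 D2 μ :=
    hindep.comp (Measurable.of_discrete (f := fun i : Bool × Bool => if i.2 then (1:ℝ) else 0))
      (by fun_prop : Measurable (fun z : ℝ × ℝ × ℝ × ℝ => z.2.2.2 - z.2.2.1))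
  have ib1DZ : IndepFun b1 (fun ω => D1 ω * Z02 ω) μ :=
    hindep.comp (Measurable.of_discrete (f := fun i : Bool × Bool => if i.1 then (1:ℝ) else 0))
      (by fun_prop : Measurable (fun z : ℝ × ℝ × ℝ × ℝ => (z.2.1 - z.1) * z.2.2.1))
  have ib2ZD : IndepFun b2 (fun ω => Z01 ω * D2 ω) μ :=
    hindep.comp (Measurable.of_discrete (f := fun i : Bool × Bool => if i.2 then (1:ℝ) else 0))
      (by fun_prop : Measurable (fun z : ℝ × ℝ × ℝ × ℝ => z.1 * (z.2.2.2 - z.2.2.1)))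
  have ibbDD : IndepFun (fun ω => b1 ω * b2 ω) (fun ω => D1 ω * D2 ω) μ :=
    hindep.comp
      (Measurable.of_discrete (f := fun i : Bool × Bool =>
        (if i.1 then (1:ℝ) else 0) * (if i.2 then (1:ℝ) else 0)))
      (by fun_prop : Measurable (fun z : ℝ × ℝ × ℝ × ℝ => (z.2.1 - z.1) * (z.2.2.2 - z.2.2.1)))
  -- integrabilities of products
  have hZZint : Integrable (fun ω => Z01 ω * Z02 ω) μ := iZ12.integrable_mul hZ01 hZ02
  have hDZint : Integrable (fun ω => D1 ω * Z02 ω) μ := iD1Z02.integrable_mul hD1int hZ02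
  have hZDint : Integrable (fun ω => Z01 ω * D2 ω) μ := iZ01D2.integrable_mul hZ01 hD2int
  have hDDint : Integrable (fun ω => D1 ω * D2 ω) μ := iD1D2.integrable_mul hD1int hD2int
  have hbDZint : Integrable (fun ω => b1 ω * (D1 ω * Z02 ω)) μ :=
    ib1DZ.integrable_mul hb1int hDZint
  have hbZDint : Integrable (fun ω => b2 ω * (Z01 ω * D2 ω)) μ :=
    ib2ZD.integrable_mul hb2int hZDint
  have hbbDDint : Integrable (fun ω => (b1 ω * b2 ω) * (D1 ω * D2 ω)) μ :=
    ibbDD.integrable_mul hbbint hDDint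
  have hb1D1int : Integrable (fun ω => b1 ω * D1 ω) μ := ib1D1.integrable_mul hb1int hD1int
  have hb2D2int : Integrable (fun ω => b2 ω * D2 ω) μ := ib2D2.integrable_mul hb2int hD2int
  -- probabilities as integrals of indicators
  have hp1 : ∫ ω, b1 ω ∂μ = (μ {ω | I1 ω = true}).toReal := by
    simpa using integral_boolInd μ (p := fun ω => I1 ω = true)
      (hI1m (measurableSet_singleton true))
  have hp2 : ∫ ω, b2 ω ∂μ = (μ {ω | I2 ω = true}).toReal := by
    simpa using integral_boolInd μ (p := fun ω => I2 ω = true)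
      (hI2m (measurableSet_singleton true))
  have hp12 : ∫ ω, b1 ω * b2 ω ∂μ = (μ {ω | I1 ω = true ∧ I2 ω = true}).toReal := by
    have hs : MeasurableSet {ω | I1 ω = true ∧ I2 ω = true} :=
      (hI1m (measurableSet_singleton true)).inter (hI2m (measurableSet_singleton true))
    have := integral_boolInd μ (p := fun ω => I1 ω = true ∧ I2 ω = true) hs
    rw [← this]
    refine integral_congr_ae (Filter.Eventually.of_forall fun ω => ?_)
    by_cases h : I1 ω <;> by_cases h' : I2 ω <;> simp [hb1def, hb2def, h, h']
  -- pointwise decomposition X_j = Z0j + b_j * D_j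
  have hX1eq : ∀ ω, (if I1 ω then Z11 ω else Z01 ω) = Z01 ω + b1 ω * D1 ω := by
    intro ω; by_cases h : I1 ω <;> simp [hb1def, hD1def, h] <;> ring
  have hX2eq : ∀ ω, (if I2 ω then Z12 ω else Z02 ω) = Z02 ω + b2 ω * D2 ω := by
    intro ω; by_cases h : I2 ω <;> simp [hb2def, hD2def, h] <;> ring
  -- marginal expectations
  have hEX1 : (∫ ω, (if I1 ω then Z11 ω else Z01 ω) ∂μ)
      = (∫ ω, Z01 ω ∂μ) + (∫ ω, b1 ω ∂μ) * ((∫ ω, Z11 ω ∂μ) - ∫ ω, Z01 ω ∂μ) := by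
    have h1 : (∫ ω, (if I1 ω then Z11 ω else Z01 ω) ∂μ)
        = ∫ ω, Z01 ω + b1 ω * D1 ω ∂μ := integral_congr_ae
          (Filter.Eventually.of_forall fun ω => hX1eq ω)
    rw [h1, integral_add hZ01 hb1D1int,
      ib1D1.integral_fun_mul_eq_mul_integral hb1m.aestronglyMeasurable hD1m.aestronglyMeasurable,
      hD1def]
    rw [integral_sub hZ11 hZ01]
  have hEX2 : (∫ ω, (if I2 ω then Z12 ω else Z02 ω) ∂μ)
      = (∫ ω, Z02 ω ∂μ) + (∫ ω, b2 ω ∂μ) * ((∫ ω, Z12 ω ∂μ) - ∫ ω, Z02 ω ∂μ) := by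
    have h1 : (∫ ω, (if I2 ω then Z12 ω else Z02 ω) ∂μ)
        = ∫ ω, Z02 ω + b2 ω * D2 ω ∂μ := integral_congr_ae
          (Filter.Eventually.of_forall fun ω => hX2eq ω)
    rw [h1, integral_add hZ02 hb2D2int,
      ib2D2.integral_fun_mul_eq_mul_integral hb2m.aestronglyMeasurable hD2m.aestronglyMeasurable,
      hD2def]
    rw [integral_sub hZ12 hZ02]
  -- expectation of the product
  have hED1 : ∫ ω, D1 ω ∂μ = (∫ ω, Z11 ω ∂μ) - ∫ ω, Z01 ω ∂μ := by
    rw [hD1def]; exact integral_sub hZ11 hZ01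
  have hED2 : ∫ ω, D2 ω ∂μ = (∫ ω, Z12 ω ∂μ) - ∫ ω, Z02 ω ∂μ := by
    rw [hD2def]; exact integral_sub hZ12 hZ02
  have hEprod : (∫ ω, (if I1 ω then Z11 ω else Z01 ω) * (if I2 ω then Z12 ω else Z02 ω) ∂μ)
      = (∫ ω, Z01 ω ∂μ) * (∫ ω, Z02 ω ∂μ)
        + (∫ ω, b2 ω ∂μ) * ((∫ ω, Z01 ω ∂μ) * (∫ ω, D2 ω ∂μ))
        + (∫ ω, b1 ω ∂μ) * ((∫ ω, D1 ω ∂μ) * (∫ ω, Z02 ω ∂μ))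
        + (∫ ω, b1 ω * b2 ω ∂μ) * ((∫ ω, D1 ω ∂μ) * (∫ ω, D2 ω ∂μ)) := by
    have h1 : (∫ ω, (if I1 ω then Z11 ω else Z01 ω) * (if I2 ω then Z12 ω else Z02 ω) ∂μ)
        = ∫ ω, (Z01 ω * Z02 ω + b2 ω * (Z01 ω * D2 ω))
            + (b1 ω * (D1 ω * Z02 ω) + (b1 ω * b2 ω) * (D1 ω * D2 ω)) ∂μ := by
      refine integral_congr_ae (Filter.Eventually.of_forall fun ω => ?_)
      dsimp only
      rw [hX1eq ω, hX2eq ω]; ring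
    have hA : Integrable (fun ω => Z01 ω * Z02 ω + b2 ω * (Z01 ω * D2 ω)) μ :=
      hZZint.add hbZDint
    have hB : Integrable (fun ω => b1 ω * (D1 ω * Z02 ω) + b1 ω * b2 ω * (D1 ω * D2 ω)) μ :=
      hbDZint.add hbbDDint
    rw [h1, integral_add hA hB,
      integral_add hZZint hbZDint, integral_add hbDZint hbbDDint,
      iZ12.integral_fun_mul_eq_mul_integral hZ01m.aestronglyMeasurable hZ02m.aestronglyMeasurable,
      ib2ZD.integral_fun_mul_eq_mul_integral hb2m.aestronglyMeasurable (hZ01m.mul hD2m).aestronglyMeasurable,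
      iZ01D2.integral_fun_mul_eq_mul_integral hZ01m.aestronglyMeasurable hD2m.aestronglyMeasurable,
      ib1DZ.integral_fun_mul_eq_mul_integral hb1m.aestronglyMeasurable (hD1m.mul hZ02m).aestronglyMeasurable,
      iD1Z02.integral_fun_mul_eq_mul_integral hD1m.aestronglyMeasurable hZ02m.aestronglyMeasurable,
      ibbDD.integral_fun_mul_eq_mul_integral hbb.aestronglyMeasurable (hD1m.mul hD2m).aestronglyMeasurable,
      iD1D2.integral_fun_mul_eq_mul_integral hD1m.aestronglyMeasurable hD2m.aestronglyMeasurable]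
    ring
  rw [hEprod, hEX1, hEX2, hED1, hED2, hp1, hp2, hp12]
  ring
end

section
/- Let p_1, p_2 ∈ (0,1). Let U_{0,1}, U_{0,2}, U_{1,1}, U_{1,2} be i.i.d. random variables uniformly distributed on [0,1], and let (I_1, I_2) be a {0,1}^2-valued random vector with P(I_j = 1) = p_j, independent of the four uniforms. Define U_j = U_{0,j}^{1−p_j} U_{1,j}^{I_j} for j = 1, 2. Then the Spearman correlation ρ_S(U_1, U_2) := 12 · E[U_1 U_2] − 3 satisfies ρ_S(U_1, U_2) = 3 · Cov(I_1, I_2) / ((2 − p_1)(2 − p_2)). -/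
open MeasureTheory ProbabilityTheory

open intervalIntegral

lemma ae_mem_Icc' {Ω : Type*} [MeasurableSpace Ω] {μ : Measure Ω} [IsProbabilityMeasure μ]
    {U : Ω → ℝ} (hm : Measurable U)
    (h : Measure.map U μ = volume.restrict (Set.Icc (0:ℝ) 1)) :
    ∀ᵐ ω ∂μ, U ω ∈ Set.Icc (0:ℝ) 1 := by
  have h1 : μ (U ⁻¹' Set.Icc (0:ℝ) 1) = 1 := by
    rw [← Measure.map_apply hm measurableSet_Icc, h,
      Measure.restrict_apply measurableSet_Icc, Set.inter_self, Real.volume_Icc]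
    norm_num
  have h2 : μ ((U ⁻¹' Set.Icc (0:ℝ) 1)ᶜ) = 0 := by
    rw [measure_compl (hm measurableSet_Icc) (measure_ne_top _ _), h1, measure_univ]
    simp
  filter_upwards [measure_eq_zero_iff_ae_notMem.mp h2] with ω hω
  simpa using hω

lemma integral_rpow_unifIcc' {r : ℝ} (hr : -1 < r) :
    ∫ x in Set.Icc (0:ℝ) 1, x ^ r = 1 / (r + 1) := by
  rw [MeasureTheory.integral_Icc_eq_integral_Ioc,
    ← intervalIntegral.integral_of_le (zero_le_one), integral_rpow (Or.inl hr)]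
  rw [Real.one_rpow, Real.zero_rpow (by linarith)]
  ring

lemma integral_sub_one_unifIcc' : ∫ x in Set.Icc (0:ℝ) 1, (x - 1) = -(1/2) := by
  rw [MeasureTheory.integral_Icc_eq_integral_Ioc,
    ← intervalIntegral.integral_of_le (zero_le_one)]
  have h : ∫ x in (0:ℝ)..1, (x - 1) = (∫ x in (0:ℝ)..1, x) - ∫ x in (0:ℝ)..1, (1:ℝ) :=
    intervalIntegral.integral_sub intervalIntegrable_id (_root_.intervalIntegrable_const (c := (1:ℝ)))
  rw [h, integral_id]
  norm_num


/-- Spearman's rho of a bivariate GFGM pair: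
`ρ_S(U₁,U₂) = 12 E[U₁U₂] - 3 = 3 Cov(I₁,I₂) / ((2-p₁)(2-p₂))`. -/
theorem gfgm_spearman_rho
    {Ω : Type*} [MeasurableSpace Ω] (μ : Measure Ω) [IsProbabilityMeasure μ]
    (p1 p2 : ℝ) (hp1 : p1 ∈ Set.Ioo (0 : ℝ) 1) (hp2 : p2 ∈ Set.Ioo (0 : ℝ) 1)
    (U01 U02 U11 U12 : Ω → ℝ)
    (hU01m : Measurable U01) (hU02m : Measurable U02)
    (hU11m : Measurable U11) (hU12m : Measurable U12)
    (hU01 : Measure.map U01 μ = volume.restrict (Set.Icc (0 : ℝ) 1))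
    (hU02 : Measure.map U02 μ = volume.restrict (Set.Icc (0 : ℝ) 1))
    (hU11 : Measure.map U11 μ = volume.restrict (Set.Icc (0 : ℝ) 1))
    (hU12 : Measure.map U12 μ = volume.restrict (Set.Icc (0 : ℝ) 1))
    (hUindep : iIndepFun ![U01, U02, U11, U12] μ)
    (I1 I2 : Ω → Bool) (hI1m : Measurable I1) (hI2m : Measurable I2)
    (hI1p : μ {ω | I1 ω = true} = ENNReal.ofReal p1)
    (hI2p : μ {ω | I2 ω = true} = ENNReal.ofReal p2)
    (hindep : IndepFun (fun ω => (U01 ω, U02 ω, U11 ω, U12 ω))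
      (fun ω => (I1 ω, I2 ω)) μ) :
    12 * (∫ ω, (U01 ω ^ (1 - p1) * (if I1 ω then U11 ω else 1))
              * (U02 ω ^ (1 - p2) * (if I2 ω then U12 ω else 1)) ∂μ) - 3
      = 3 * ((μ {ω | I1 ω = true ∧ I2 ω = true}).toReal - p1 * p2)
          / ((2 - p1) * (2 - p2)) := by
  obtain ⟨hp1a, hp1b⟩ := hp1
  obtain ⟨hp2a, hp2b⟩ := hp2
  -- abbreviations
  set A : Ω → ℝ := fun ω => U01 ω ^ (1 - p1) with hA_def
  set B : Ω → ℝ := fun ω => U02 ω ^ (1 - p2) with hB_def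
  set V1 : Ω → ℝ := fun ω => U11 ω - 1 with hV1_def
  set V2 : Ω → ℝ := fun ω => U12 ω - 1 with hV2_def
  set χ1 : Ω → ℝ := fun ω => if I1 ω then (1:ℝ) else 0 with hχ1_def
  set χ2 : Ω → ℝ := fun ω => if I2 ω then (1:ℝ) else 0 with hχ2_def
  set q : ℝ := (μ {ω | I1 ω = true ∧ I2 ω = true}).toReal with hq_def
  -- measurability
  have mr1 : Measurable (fun x : ℝ => x ^ (1 - p1)) :=
    (Real.continuous_rpow_const (by linarith)).measurable
  have mr2 : Measurable (fun x : ℝ => x ^ (1 - p2)) :=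
    (Real.continuous_rpow_const (by linarith)).measurable
  have hAm : Measurable A := mr1.comp hU01m
  have hBm : Measurable B := mr2.comp hU02m
  have hV1m : Measurable V1 := hU11m.sub measurable_const
  have hV2m : Measurable V2 := hU12m.sub measurable_const
  have hχ1m : Measurable χ1 :=
    (measurable_of_countable (fun b : Bool => if b then (1:ℝ) else 0)).comp hI1m
  have hχ2m : Measurable χ2 :=
    (measurable_of_countable (fun b : Bool => if b then (1:ℝ) else 0)).comp hI2m
  -- a.e. bounds
  have hae01 := ae_mem_Icc' hU01m hU01
  have hae02 := ae_mem_Icc' hU02m hU02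
  have hae11 := ae_mem_Icc' hU11m hU11
  have hae12 := ae_mem_Icc' hU12m hU12
  have haeA : ∀ᵐ ω ∂μ, |A ω| ≤ 1 := by
    filter_upwards [hae01] with ω hω
    rw [abs_of_nonneg (Real.rpow_nonneg hω.1 _)]
    exact Real.rpow_le_one hω.1 hω.2 (by linarith)
  have haeB : ∀ᵐ ω ∂μ, |B ω| ≤ 1 := by
    filter_upwards [hae02] with ω hω
    rw [abs_of_nonneg (Real.rpow_nonneg hω.1 _)]
    exact Real.rpow_le_one hω.1 hω.2 (by linarith)
  have haeV1 : ∀ᵐ ω ∂μ, |V1 ω| ≤ 1 := by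
    filter_upwards [hae11] with ω hω
    have h1 := hω.1; have h2 := hω.2
    show |U11 ω - 1| ≤ 1
    rw [abs_le]; constructor <;> linarith
  have haeV2 : ∀ᵐ ω ∂μ, |V2 ω| ≤ 1 := by
    filter_upwards [hae12] with ω hω
    have h1 := hω.1; have h2 := hω.2
    show |U12 ω - 1| ≤ 1
    rw [abs_le]; constructor <;> linarith
  have hbχ1 : ∀ ω, |χ1 ω| ≤ 1 := by
    intro ω; by_cases h : I1 ω <;> simp [hχ1_def, h]
  have hbχ2 : ∀ ω, |χ2 ω| ≤ 1 := by
    intro ω; by_cases h : I2 ω <;> simp [hχ2_def, h]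
  -- integrability helper
  have intg : ∀ {f : Ω → ℝ}, Measurable f → (∀ᵐ ω ∂μ, |f ω| ≤ 1) → Integrable f μ := by
    intro f hm hb
    refine Integrable.mono' (integrable_const 1) hm.aestronglyMeasurable ?_
    simpa [Real.norm_eq_abs] using hb
  have mul_abs : ∀ {a b : ℝ}, |a| ≤ 1 → |b| ≤ 1 → |a * b| ≤ 1 := by
    intro a b ha hb
    rw [abs_mul]
    calc |a| * |b| ≤ 1 * 1 := mul_le_mul ha hb (abs_nonneg _) zero_le_one
    _ = 1 := by ring
  have intA : Integrable A μ := intg hAm haeA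
  have intB : Integrable B μ := intg hBm haeB
  have intV1 : Integrable V1 μ := intg hV1m haeV1
  have intV2 : Integrable V2 μ := intg hV2m haeV2
  have intχ1 : Integrable χ1 μ := intg hχ1m (Filter.Eventually.of_forall hbχ1)
  have intχ2 : Integrable χ2 μ := intg hχ2m (Filter.Eventually.of_forall hbχ2)
  have intAB : Integrable (fun ω => A ω * B ω) μ := by
    refine intg (hAm.mul hBm) ?_
    filter_upwards [haeA, haeB] with ω h1 h2 using mul_abs h1 h2
  have intABV1 : Integrable (fun ω => A ω * B ω * V1 ω) μ := by
    refine intg ((hAm.mul hBm).mul hV1m) ?_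
    filter_upwards [haeA, haeB, haeV1] with ω h1 h2 h3 using mul_abs (mul_abs h1 h2) h3
  have intABV2 : Integrable (fun ω => A ω * B ω * V2 ω) μ := by
    refine intg ((hAm.mul hBm).mul hV2m) ?_
    filter_upwards [haeA, haeB, haeV2] with ω h1 h2 h3 using mul_abs (mul_abs h1 h2) h3
  have intV1V2 : Integrable (fun ω => V1 ω * V2 ω) μ := by
    refine intg (hV1m.mul hV2m) ?_
    filter_upwards [haeV1, haeV2] with ω h1 h2 using mul_abs h1 h2
  have intABV1V2 : Integrable (fun ω => A ω * B ω * (V1 ω * V2 ω)) μ := by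
    refine intg ((hAm.mul hBm).mul (hV1m.mul hV2m)) ?_
    filter_upwards [haeA, haeB, haeV1, haeV2] with ω h1 h2 h3 h4
    exact mul_abs (mul_abs h1 h2) (mul_abs h3 h4)
  have intχ1χ2 : Integrable (fun ω => χ1 ω * χ2 ω) μ :=
    intg (hχ1m.mul hχ2m) (Filter.Eventually.of_forall fun ω => mul_abs (hbχ1 ω) (hbχ2 ω))
  -- single integrals (uniform side)
  have hIA : ∫ ω, A ω ∂μ = 1 / (2 - p1) := by
    have h := integral_map (μ := μ) (φ := U01) hU01m.aemeasurable
      (f := fun x : ℝ => x ^ (1 - p1))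
      (Measurable.aestronglyMeasurable mr1)
    rw [hU01] at h
    rw [hA_def, ← h, integral_rpow_unifIcc' (by linarith)]
    rw [show 1 - p1 + 1 = 2 - p1 by ring]
  have hIB : ∫ ω, B ω ∂μ = 1 / (2 - p2) := by
    have h := integral_map (μ := μ) (φ := U02) hU02m.aemeasurable
      (f := fun x : ℝ => x ^ (1 - p2))
      (Measurable.aestronglyMeasurable mr2)
    rw [hU02] at h
    rw [hB_def, ← h, integral_rpow_unifIcc' (by linarith)]
    rw [show 1 - p2 + 1 = 2 - p2 by ring]
  have hIV1 : ∫ ω, V1 ω ∂μ = -(1/2) := by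
    have h := integral_map (μ := μ) (φ := U11) hU11m.aemeasurable
      (f := fun x : ℝ => x - 1)
      (Measurable.aestronglyMeasurable (measurable_id.sub measurable_const))
    rw [hU11] at h
    rw [hV1_def, ← h, integral_sub_one_unifIcc']
  have hIV2 : ∫ ω, V2 ω ∂μ = -(1/2) := by
    have h := integral_map (μ := μ) (φ := U12) hU12m.aemeasurable
      (f := fun x : ℝ => x - 1)
      (Measurable.aestronglyMeasurable (measurable_id.sub measurable_const))
    rw [hU12] at h
    rw [hV2_def, ← h, integral_sub_one_unifIcc']
  -- single integrals (Bool side)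
  have hIχ1 : ∫ ω, χ1 ω ∂μ = p1 := by
    have he : χ1 = Set.indicator {ω | I1 ω = true} (fun _ => (1:ℝ)) := by
      funext ω; by_cases h : I1 ω <;> simp [hχ1_def, Set.indicator_apply, h]
    have hms1 : MeasurableSet {ω | I1 ω = true} := hI1m (measurableSet_singleton true)
    rw [he, integral_indicator_const _ hms1, measureReal_def, hI1p,
      ENNReal.toReal_ofReal hp1a.le, smul_eq_mul, mul_one]
  have hIχ2 : ∫ ω, χ2 ω ∂μ = p2 := by
    have he : χ2 = Set.indicator {ω | I2 ω = true} (fun _ => (1:ℝ)) := by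
      funext ω; by_cases h : I2 ω <;> simp [hχ2_def, Set.indicator_apply, h]
    have hms2 : MeasurableSet {ω | I2 ω = true} := hI2m (measurableSet_singleton true)
    rw [he, integral_indicator_const _ hms2, measureReal_def, hI2p,
      ENNReal.toReal_ofReal hp2a.le, smul_eq_mul, mul_one]
  have hIχ12 : ∫ ω, χ1 ω * χ2 ω ∂μ = q := by
    have he : (fun ω => χ1 ω * χ2 ω)
        = Set.indicator {ω | I1 ω = true ∧ I2 ω = true} (fun _ => (1:ℝ)) := by
      funext ω
      by_cases h1 : I1 ω <;> by_cases h2 : I2 ω <;>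
        simp [hχ1_def, hχ2_def, Set.indicator_apply, h1, h2]
    have hms : MeasurableSet {ω | I1 ω = true ∧ I2 ω = true} := by
      have : {ω | I1 ω = true ∧ I2 ω = true}
          = I1 ⁻¹' {true} ∩ I2 ⁻¹' {true} := by ext ω; simp
      rw [this]
      exact (hI1m (measurableSet_singleton true)).inter (hI2m (measurableSet_singleton true))
    rw [he, integral_indicator_const _ hms, smul_eq_mul, mul_one, hq_def, measureReal_def]
  -- independence of uniform coordinates
  have hfm : ∀ i, Measurable (![U01, U02, U11, U12] i) := by
    intro i; fin_cases i <;> assumption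
  have h01 : IndepFun U01 U02 μ := by
    have := hUindep.indepFun (i := 0) (j := 1) (by decide)
    simpa using this
  have h23 : IndepFun U11 U12 μ := by
    have := hUindep.indepFun (i := 2) (j := 3) (by decide)
    simpa using this
  have hpair2 : IndepFun (fun ω => (U01 ω, U02 ω)) U11 μ := by
    have := hUindep.indepFun_prodMk hfm 0 1 2 (by decide) (by decide)
    simpa using this
  have hpair3 : IndepFun (fun ω => (U01 ω, U02 ω)) U12 μ := by
    have := hUindep.indepFun_prodMk hfm 0 1 3 (by decide) (by decide)
    simpa using this
  have hpair23 : IndepFun (fun ω => (U01 ω, U02 ω)) (fun ω => (U11 ω, U12 ω)) μ := by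
    have := hUindep.indepFun_prodMk_prodMk hfm 0 1 2 3
      (by decide) (by decide) (by decide) (by decide)
    simpa using this
  -- measurable bits for comps
  have mφ : Measurable (fun x : ℝ × ℝ => x.1 ^ (1 - p1) * x.2 ^ (1 - p2)) :=
    (mr1.comp measurable_fst).mul (mr2.comp measurable_snd)
  -- split uniform-side integrals
  have hIAB : ∫ ω, A ω * B ω ∂μ = (1 / (2 - p1)) * (1 / (2 - p2)) := by
    have hind : IndepFun A B μ := h01.comp mr1 mr2
    have := hind.integral_mul_eq_mul_integral intA.aestronglyMeasurable intB.aestronglyMeasurable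
    rw [show A * B = fun ω => A ω * B ω from rfl] at this
    rw [this, hIA, hIB]
  have hIABV1 : ∫ ω, A ω * B ω * V1 ω ∂μ = (1 / (2 - p1)) * (1 / (2 - p2)) * (-(1/2)) := by
    have hind : IndepFun (fun ω => A ω * B ω) V1 μ :=
      hpair2.comp mφ (measurable_id.sub measurable_const)
    have := hind.integral_mul_eq_mul_integral intAB.aestronglyMeasurable intV1.aestronglyMeasurable
    rw [show (fun ω => A ω * B ω) * V1 = fun ω => A ω * B ω * V1 ω from rfl] at this
    rw [this, hIAB, hIV1]
  have hIABV2 : ∫ ω, A ω * B ω * V2 ω ∂μ = (1 / (2 - p1)) * (1 / (2 - p2)) * (-(1/2)) := by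
    have hind : IndepFun (fun ω => A ω * B ω) V2 μ :=
      hpair3.comp mφ (measurable_id.sub measurable_const)
    have := hind.integral_mul_eq_mul_integral intAB.aestronglyMeasurable intV2.aestronglyMeasurable
    rw [show (fun ω => A ω * B ω) * V2 = fun ω => A ω * B ω * V2 ω from rfl] at this
    rw [this, hIAB, hIV2]
  have hIV1V2 : ∫ ω, V1 ω * V2 ω ∂μ = (-(1/2)) * (-(1/2)) := by
    have hind : IndepFun V1 V2 μ := h23.comp (measurable_id.sub measurable_const)
      (measurable_id.sub measurable_const)
    have := hind.integral_mul_eq_mul_integral intV1.aestronglyMeasurable intV2.aestronglyMeasurable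
    rw [show V1 * V2 = fun ω => V1 ω * V2 ω from rfl] at this
    rw [this, hIV1, hIV2]
  have hIABV1V2 : ∫ ω, A ω * B ω * (V1 ω * V2 ω) ∂μ
      = (1 / (2 - p1)) * (1 / (2 - p2)) * ((-(1/2)) * (-(1/2))) := by
    have hind : IndepFun (fun ω => A ω * B ω) (fun ω => V1 ω * V2 ω) μ :=
      hpair23.comp mφ ((measurable_fst.sub measurable_const).mul
        (measurable_snd.sub measurable_const))
    have := hind.integral_mul_eq_mul_integral intAB.aestronglyMeasurable intV1V2.aestronglyMeasurable
    rw [show (fun ω => A ω * B ω) * (fun ω => V1 ω * V2 ω)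
      = fun ω => A ω * B ω * (V1 ω * V2 ω) from rfl] at this
    rw [this, hIAB, hIV1V2]
  -- independence uniform side vs Bool side
  have mχ : Measurable (fun b : Bool × Bool => if b.1 then (1:ℝ) else 0) :=
    measurable_of_countable _
  have mχ' : Measurable (fun b : Bool × Bool => if b.2 then (1:ℝ) else 0) :=
    measurable_of_countable _
  have mχχ : Measurable (fun b : Bool × Bool =>
      (if b.1 then (1:ℝ) else 0) * (if b.2 then (1:ℝ) else 0)) :=
    measurable_of_countable _
  have m4V1 : Measurable (fun x : ℝ × ℝ × ℝ × ℝ =>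
      x.1 ^ (1 - p1) * x.2.1 ^ (1 - p2) * (x.2.2.1 - 1)) :=
    ((mr1.comp measurable_fst).mul (mr2.comp (measurable_fst.comp measurable_snd))).mul
      ((measurable_fst.comp (measurable_snd.comp measurable_snd)).sub measurable_const)
  have m4V2 : Measurable (fun x : ℝ × ℝ × ℝ × ℝ =>
      x.1 ^ (1 - p1) * x.2.1 ^ (1 - p2) * (x.2.2.2 - 1)) :=
    ((mr1.comp measurable_fst).mul (mr2.comp (measurable_fst.comp measurable_snd))).mul
      ((measurable_snd.comp (measurable_snd.comp measurable_snd)).sub measurable_const)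
  have m4V1V2 : Measurable (fun x : ℝ × ℝ × ℝ × ℝ =>
      x.1 ^ (1 - p1) * x.2.1 ^ (1 - p2) * ((x.2.2.1 - 1) * (x.2.2.2 - 1))) :=
    ((mr1.comp measurable_fst).mul (mr2.comp (measurable_fst.comp measurable_snd))).mul
      (((measurable_fst.comp (measurable_snd.comp measurable_snd)).sub measurable_const).mul
        ((measurable_snd.comp (measurable_snd.comp measurable_snd)).sub measurable_const))
  have hT2 : ∫ ω, A ω * B ω * V1 ω * χ1 ω ∂μ
      = (1 / (2 - p1)) * (1 / (2 - p2)) * (-(1/2)) * p1 := by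
    have hind : IndepFun (fun ω => A ω * B ω * V1 ω) χ1 μ :=
      hindep.comp m4V1 mχ
    have := hind.integral_mul_eq_mul_integral intABV1.aestronglyMeasurable intχ1.aestronglyMeasurable
    rw [show (fun ω => A ω * B ω * V1 ω) * χ1
      = fun ω => A ω * B ω * V1 ω * χ1 ω from rfl] at this
    rw [this, hIABV1, hIχ1]
  have hT3 : ∫ ω, A ω * B ω * V2 ω * χ2 ω ∂μ
      = (1 / (2 - p1)) * (1 / (2 - p2)) * (-(1/2)) * p2 := by
    have hind : IndepFun (fun ω => A ω * B ω * V2 ω) χ2 μ :=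
      hindep.comp m4V2 mχ'
    have := hind.integral_mul_eq_mul_integral intABV2.aestronglyMeasurable intχ2.aestronglyMeasurable
    rw [show (fun ω => A ω * B ω * V2 ω) * χ2
      = fun ω => A ω * B ω * V2 ω * χ2 ω from rfl] at this
    rw [this, hIABV2, hIχ2]
  have hT4 : ∫ ω, A ω * B ω * (V1 ω * V2 ω) * (χ1 ω * χ2 ω) ∂μ
      = (1 / (2 - p1)) * (1 / (2 - p2)) * ((-(1/2)) * (-(1/2))) * q := by
    have hind : IndepFun (fun ω => A ω * B ω * (V1 ω * V2 ω))
        (fun ω => χ1 ω * χ2 ω) μ := hindep.comp m4V1V2 mχχ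
    have := hind.integral_mul_eq_mul_integral intABV1V2.aestronglyMeasurable intχ1χ2.aestronglyMeasurable
    rw [show (fun ω => A ω * B ω * (V1 ω * V2 ω)) * (fun ω => χ1 ω * χ2 ω)
      = fun ω => A ω * B ω * (V1 ω * V2 ω) * (χ1 ω * χ2 ω) from rfl] at this
    rw [this, hIABV1V2, hIχ12]
  -- pointwise decomposition of the integrand
  have hpt : ∀ ω, (U01 ω ^ (1 - p1) * (if I1 ω then U11 ω else 1))
        * (U02 ω ^ (1 - p2) * (if I2 ω then U12 ω else 1))
      = A ω * B ω + A ω * B ω * V1 ω * χ1 ω + A ω * B ω * V2 ω * χ2 ω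
        + A ω * B ω * (V1 ω * V2 ω) * (χ1 ω * χ2 ω) := by
    intro ω
    by_cases h1 : I1 ω <;> by_cases h2 : I2 ω <;>
      simp [hA_def, hB_def, hV1_def, hV2_def, hχ1_def, hχ2_def, h1, h2] <;> ring
  -- integrability of terms with Bool factors
  have intT2 : Integrable (fun ω => A ω * B ω * V1 ω * χ1 ω) μ := by
    refine intg (((hAm.mul hBm).mul hV1m).mul hχ1m) ?_
    filter_upwards [haeA, haeB, haeV1] with ω h1 h2 h3
    exact mul_abs (mul_abs (mul_abs h1 h2) h3) (hbχ1 ω)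
  have intT3 : Integrable (fun ω => A ω * B ω * V2 ω * χ2 ω) μ := by
    refine intg (((hAm.mul hBm).mul hV2m).mul hχ2m) ?_
    filter_upwards [haeA, haeB, haeV2] with ω h1 h2 h3
    exact mul_abs (mul_abs (mul_abs h1 h2) h3) (hbχ2 ω)
  have intT4 : Integrable (fun ω => A ω * B ω * (V1 ω * V2 ω) * (χ1 ω * χ2 ω)) μ := by
    refine intg (((hAm.mul hBm).mul (hV1m.mul hV2m)).mul (hχ1m.mul hχ2m)) ?_
    filter_upwards [haeA, haeB, haeV1, haeV2] with ω h1 h2 h3 h4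
    exact mul_abs (mul_abs (mul_abs h1 h2) (mul_abs h3 h4)) (mul_abs (hbχ1 ω) (hbχ2 ω))
  -- assemble
  have hE : (∫ ω, (U01 ω ^ (1 - p1) * (if I1 ω then U11 ω else 1))
        * (U02 ω ^ (1 - p2) * (if I2 ω then U12 ω else 1)) ∂μ)
      = (1 / (2 - p1)) * (1 / (2 - p2))
        * (1 - p1 / 2 - p2 / 2 + q / 4) := by
    rw [show (fun ω => (U01 ω ^ (1 - p1) * (if I1 ω then U11 ω else 1))
        * (U02 ω ^ (1 - p2) * (if I2 ω then U12 ω else 1)))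
      = fun ω => A ω * B ω + A ω * B ω * V1 ω * χ1 ω + A ω * B ω * V2 ω * χ2 ω
        + A ω * B ω * (V1 ω * V2 ω) * (χ1 ω * χ2 ω) from funext hpt]
    have intS1 : Integrable (fun ω => A ω * B ω + A ω * B ω * V1 ω * χ1 ω) μ :=
      intAB.add intT2
    have intS2 : Integrable (fun ω => A ω * B ω + A ω * B ω * V1 ω * χ1 ω
        + A ω * B ω * V2 ω * χ2 ω) μ := intS1.add intT3
    have e3 : (∫ ω, (A ω * B ω + A ω * B ω * V1 ω * χ1 ω + A ω * B ω * V2 ω * χ2 ω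
          + A ω * B ω * (V1 ω * V2 ω) * (χ1 ω * χ2 ω)) ∂μ)
        = (∫ ω, (A ω * B ω + A ω * B ω * V1 ω * χ1 ω + A ω * B ω * V2 ω * χ2 ω) ∂μ)
          + ∫ ω, A ω * B ω * (V1 ω * V2 ω) * (χ1 ω * χ2 ω) ∂μ :=
      integral_add intS2 intT4
    have e2 : (∫ ω, (A ω * B ω + A ω * B ω * V1 ω * χ1 ω + A ω * B ω * V2 ω * χ2 ω) ∂μ)
        = (∫ ω, (A ω * B ω + A ω * B ω * V1 ω * χ1 ω) ∂μ)
          + ∫ ω, A ω * B ω * V2 ω * χ2 ω ∂μ :=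
      integral_add intS1 intT3
    have e1 : (∫ ω, (A ω * B ω + A ω * B ω * V1 ω * χ1 ω) ∂μ)
        = (∫ ω, A ω * B ω ∂μ) + ∫ ω, A ω * B ω * V1 ω * χ1 ω ∂μ :=
      integral_add intAB intT2
    rw [e3, e2, e1, hIAB, hT2, hT3, hT4]
    ring
  rw [hE]
  have h1ne : (2 - p1) ≠ 0 := by linarith
  have h2ne : (2 - p2) ≠ 0 := by linarith
  field_simp
  ring
end

section
/- Let d ≥ 1 and p ∈ (0,1). Let U_{0,1}, …, U_{0,d}, U_{1,1}, …, U_{1,d} be i.i.d. random variables uniformly distributed on [0,1], and let I = (I_1, …, I_d) be a {0,1}^d-valued random vector independent of all the uniforms. Then for every x ∈ ℝ, P(Σ_{j=1}^d U_{0,j}^{1−p} U_{1,j}^{I_j} ≤ x) = Σ_{k=0}^d P(Σ_{j=1}^d I_j = k) · P(Σ_{j=1}^{k} U_{0,j}^{1−p} U_{1,j} + Σ_{j=k+1}^{d} U_{0,j}^{1−p} ≤ x), where empty sums are taken to be 0. -/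
/-!
Conditioning on `I = b` and using the independence of `I` from the uniforms, the probability is
`∑_b P(I = b) · P(S_b ≤ x)`, where `S_b` is the sum with the Bernoulli vector frozen at `b`.
The uniforms are i.i.d., so their joint law is a product measure, invariant under permuting the
index `j` simultaneously in both rows; such a permutation turns `S_b` into `S_{b'}` for any `b'`
with as many ones as `b`, in particular into the vector whose ones occupy the first `#b` places.
Grouping the `b` by their number of ones gives the formula.
-/

open MeasureTheory ProbabilityTheory Finset

noncomputable def gfgmSum {ι : Type*} [Fintype ι] (p : ℝ) (b : ι → Bool)
    (u : Bool × ι → ℝ) : ℝ :=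
  ∑ j, u (false, j) ^ (1 - p) * (if b j then u (true, j) else 1)

section
variable {ι : Type*} [Fintype ι]

theorem measurable_gfgmSum (p : ℝ) (b : ι → Bool) : Measurable (gfgmSum p b) := by
  refine Finset.measurable_sum _ fun j _ => ?_
  refine ((measurable_pi_apply _).pow_const _).mul ?_
  cases b j
  · exact measurable_const
  · exact measurable_pi_apply _

theorem gfgmSum_perm (p : ℝ) (b : ι → Bool) (σ : Equiv.Perm ι) (u : Bool × ι → ℝ) :
    gfgmSum p (b ∘ σ) (u ∘ Equiv.prodCongr (Equiv.refl Bool) σ) = gfgmSum p b u :=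
  Equiv.sum_comp σ (fun j => u (false, j) ^ (1 - p) * (if b j then u (true, j) else 1))

theorem gfgmSum_decide (p : ℝ) (P : ι → Prop) [DecidablePred P] (u : Bool × ι → ℝ) :
    gfgmSum p (fun j => decide (P j)) u =
      ∑ j ∈ univ.filter P, u (false, j) ^ (1 - p) * u (true, j) +
        ∑ j ∈ univ.filter (fun j => ¬ P j), u (false, j) ^ (1 - p) := by
  rw [gfgmSum, ← sum_filter_add_sum_filter_not univ P]
  congr 1 <;> refine sum_congr rfl fun j hj => ?_ <;> simp_all

theorem exists_perm_comp_eq_of_card_eq {b b' : ι → Bool}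
    (h : #{j | b j = true} = #{j | b' j = true}) : ∃ σ : Equiv.Perm ι, b' ∘ σ = b := by
  have e : {j // b j = true} ≃ {j // b' j = true} :=
    Fintype.equivOfCardEq (by simpa only [Fintype.card_subtype] using h)
  refine ⟨e.extendSubtype, funext fun j => ?_⟩
  by_cases hj : b j = true
  · simpa [hj] using e.extendSubtype_mem j hj
  · simpa [hj] using e.extendSubtype_not_mem j hj

theorem measurePreserving_comp_perm {α : Type*} [MeasurableSpace α] (ν : Measure α)
    [SigmaFinite ν] (σ : Equiv.Perm ι) :
    MeasurePreserving (fun u : ι → α => u ∘ σ) (Measure.pi fun _ => ν)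
      (Measure.pi fun _ => ν) := by
  convert measurePreserving_piCongrLeft (fun _ : ι => ν) σ.symm using 1
  ext u j
  simpa using
    (MeasurableEquiv.piCongrLeft_apply_apply (β := fun _ : ι => α) σ.symm u (σ j)).symm

theorem map_gfgmSum_pi_eq_of_card_eq (ν : Measure ℝ) [SigmaFinite ν] (p : ℝ)
    {b b' : ι → Bool} (h : #{j | b j = true} = #{j | b' j = true}) :
    (Measure.pi fun _ => ν).map (gfgmSum p b') = (Measure.pi fun _ => ν).map (gfgmSum p b) := by
  obtain ⟨σ, rfl⟩ := exists_perm_comp_eq_of_card_eq h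
  have hπ := measurePreserving_comp_perm ν (Equiv.prodCongr (Equiv.refl Bool) σ)
  conv_rhs => rw [← hπ.map_eq, Measure.map_map (measurable_gfgmSum p _) hπ.measurable]
  exact congrArg (Measure.map · _) (funext (gfgmSum_perm p b' σ)).symm

theorem measure_gfgmSum_le_eq_of_card_eq {Ω : Type*} [MeasurableSpace Ω] {μ : Measure Ω}
    {ν : Measure ℝ} [SigmaFinite ν] {V : Ω → Bool × ι → ℝ} (hV : Measurable V)
    (hlaw : μ.map V = Measure.pi fun _ => ν) (p x : ℝ) {b b' : ι → Bool}
    (h : #{j | b j = true} = #{j | b' j = true}) :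
    μ {ω | gfgmSum p b' (V ω) ≤ x} = μ {ω | gfgmSum p b (V ω) ≤ x} := by
  have hcdf := congrArg (· (Set.Iic x)) (map_gfgmSum_pi_eq_of_card_eq ν p h)
  simp only [← hlaw, Measure.map_map (measurable_gfgmSum p _) hV,
    Measure.map_apply ((measurable_gfgmSum p _).comp hV) measurableSet_Iic] at hcdf
  exact hcdf

end

theorem card_filter_val_lt_card {d : ℕ} (s : Finset (Fin d)) :
    #{j : Fin d | (j : ℕ) < #s} = #s :=
  Fin.card_filter_val_lt.trans (min_eq_right (s.card_le_univ.trans_eq (Fintype.card_fin d)))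

section
variable {Ω α β : Type*} [MeasurableSpace Ω] [MeasurableSpace α] [MeasurableSpace β]
  {μ : Measure Ω} {X : Ω → α} {Y : Ω → β}

theorem ProbabilityTheory.IndepFun.measure_setOf_mem_eq_sum [Fintype β]
    [MeasurableSingletonClass β]
    (hXY : IndepFun X Y μ) (hX : Measurable X) (hY : Measurable Y) {S : β → Set α}
    (hS : ∀ y, MeasurableSet (S y)) :
    μ {ω | X ω ∈ S (Y ω)} = ∑ y, μ (Y ⁻¹' {y}) * μ (X ⁻¹' S y) := by
  have hunion : {ω | X ω ∈ S (Y ω)} = ⋃ y, X ⁻¹' S y ∩ Y ⁻¹' {y} := by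
    ext ω; simp
  have hdisj : Pairwise (Function.onFun Disjoint fun y => X ⁻¹' S y ∩ Y ⁻¹' {y}) :=
    fun y y' hne => Set.disjoint_left.2 fun ω h h' => hne (h.2.symm.trans h'.2)
  rw [hunion, measure_iUnion hdisj fun y => (hX (hS y)).inter (hY (measurableSet_singleton y)),
    tsum_fintype]
  refine sum_congr rfl fun y _ => ?_
  rw [hXY.measure_inter_preimage_eq_mul _ _ (hS y) (measurableSet_singleton y), mul_comm]

theorem sum_measure_preimage_singleton_mul_comp_eq [Fintype β] [MeasurableSingletonClass β]
    {γ : Type*} [DecidableEq γ] (hY : Measurable Y) (g : β → γ) {t : Finset γ}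
    (hg : ∀ y, g y ∈ t) (c : γ → ENNReal) :
    ∑ y, μ (Y ⁻¹' {y}) * c (g y) = ∑ k ∈ t, μ ((g ∘ Y) ⁻¹' {k}) * c k := by
  rw [← sum_fiberwise_of_maps_to fun y _ => hg y]
  refine sum_congr rfl fun k _ => ?_
  rw [sum_congr rfl fun y hy => by rw [(mem_filter.1 hy).2], ← sum_mul,
    sum_measure_preimage_singleton _ fun y _ => hY (measurableSet_singleton y)]
  congr 2
  ext ω; simp

end

theorem gfgm_sum_cdf_decomposition_general
    {Ω : Type*} [MeasurableSpace Ω] (μ : Measure Ω) [IsProbabilityMeasure μ]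
    (d : ℕ) (p : ℝ)
    (U : Bool × Fin d → Ω → ℝ) (hUm : ∀ i, Measurable (U i))
    (hUunif : ∀ i, Measure.map (U i) μ = volume.restrict (Set.Icc (0 : ℝ) 1))
    (hUindep : iIndepFun U μ)
    (I : Ω → Fin d → Bool) (hIm : Measurable I)
    (hUI : IndepFun (fun ω => fun i => U i ω) I μ)
    (x : ℝ) :
    (μ {ω | ∑ j, U (false, j) ω ^ (1 - p) * (if I ω j then U (true, j) ω else 1) ≤ x}).toReal
      = ∑ k ∈ Finset.range (d + 1),
          (μ {ω | (∑ j, if I ω j then (1 : ℕ) else 0) = k}).toReal *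
          (μ {ω | (∑ j ∈ Finset.univ.filter (fun j : Fin d => (j : ℕ) < k),
                      U (false, j) ω ^ (1 - p) * U (true, j) ω)
                  + (∑ j ∈ Finset.univ.filter (fun j : Fin d => k ≤ (j : ℕ)),
                      U (false, j) ω ^ (1 - p)) ≤ x}).toReal := by
  set V : Ω → Bool × Fin d → ℝ := fun ω i => U i ω
  have hVm : Measurable V := measurable_pi_lambda _ hUm
  have hlaw : μ.map V = Measure.pi fun _ => volume.restrict (Set.Icc (0 : ℝ) 1) := by
    rw [hUindep.map_fun_eq_pi_map fun i => (hUm i).aemeasurable]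
    exact congrArg Measure.pi (funext hUunif)
  have hsublevel (b : Fin d → Bool) : MeasurableSet {u | gfgmSum p b u ≤ x} :=
    measurableSet_le (measurable_gfgmSum p b) measurable_const
  let C (k : ℕ) : ENNReal :=
    μ (V ⁻¹' {u | gfgmSum p (fun j : Fin d => decide ((j : ℕ) < k)) u ≤ x})
  have hprefix (b : Fin d → Bool) :
      μ (V ⁻¹' {u | gfgmSum p b u ≤ x}) = C (∑ j, if b j then 1 else 0) := by
    rw [← card_filter]
    exact measure_gfgmSum_le_eq_of_card_eq hVm hlaw p x (by simpa using card_filter_val_lt_card _)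
  have hcount_le (b : Fin d → Bool) : (∑ j, if b j then 1 else 0) ∈ range (d + 1) := by
    rw [← card_filter, mem_range_succ_iff]
    exact (card_le_univ _).trans_eq (Fintype.card_fin d)
  have key : μ {ω | gfgmSum p (I ω) (V ω) ≤ x} =
      ∑ k ∈ range (d + 1), μ {ω | (∑ j, if I ω j then (1 : ℕ) else 0) = k} * C k := calc
    _ = ∑ b, μ (I ⁻¹' {b}) * μ (V ⁻¹' {u | gfgmSum p b u ≤ x}) :=
      hUI.measure_setOf_mem_eq_sum hVm hIm hsublevel
    _ = ∑ b, μ (I ⁻¹' {b}) * C (∑ j, if b j then 1 else 0) :=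
      sum_congr rfl fun b _ => congrArg _ (hprefix b)
    _ = _ := sum_measure_preimage_singleton_mul_comp_eq hIm _ hcount_le C
  simp only [C, gfgmSum_decide, not_lt] at key
  refine (congrArg ENNReal.toReal key).trans ?_
  rw [ENNReal.toReal_sum fun k _ =>
    ENNReal.mul_ne_top (measure_ne_top μ _) (measure_ne_top μ _)]
  exact sum_congr rfl fun k _ => ENNReal.toReal_mul

/-- the cdf of the sum of the components of a uniform vector with
GFGM(p) copula depends on the Bernoulli vector `I` only through the distribution
of `Σ_j I_j`:
`P(Σ_j U_{0,j}^(1-p) U_{1,j}^(I_j) ≤ x) = Σ_{k=0}^d P(Σ I_j = k) ·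
   P(Σ_{j≤k} U_{0,j}^(1-p) U_{1,j} + Σ_{j>k} U_{0,j}^(1-p) ≤ x)`. -/
theorem gfgm_sum_cdf_decomposition
    {Ω : Type*} [MeasurableSpace Ω] (μ : Measure Ω) [IsProbabilityMeasure μ]
    (d : ℕ) (hd : 1 ≤ d) (p : ℝ) (hp : p ∈ Set.Ioo (0 : ℝ) 1)
    (U : Bool × Fin d → Ω → ℝ) (hUm : ∀ i, Measurable (U i))
    (hUunif : ∀ i, Measure.map (U i) μ = volume.restrict (Set.Icc (0 : ℝ) 1))
    (hUindep : iIndepFun U μ)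
    (I : Ω → Fin d → Bool) (hIm : Measurable I)
    (hUI : IndepFun (fun ω => fun i => U i ω) I μ)
    (x : ℝ) :
    (μ {ω | ∑ j, U (false, j) ω ^ (1 - p) * (if I ω j then U (true, j) ω else 1) ≤ x}).toReal
      = ∑ k ∈ Finset.range (d + 1),
          (μ {ω | (∑ j, if I ω j then (1 : ℕ) else 0) = k}).toReal *
          (μ {ω | (∑ j ∈ Finset.univ.filter (fun j : Fin d => (j : ℕ) < k),
                      U (false, j) ω ^ (1 - p) * U (true, j) ω)
                  + (∑ j ∈ Finset.univ.filter (fun j : Fin d => k ≤ (j : ℕ)),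
                      U (false, j) ω ^ (1 - p)) ≤ x}).toReal :=
  gfgm_sum_cdf_decomposition_general μ d p U hUm hUunif hUindep I hIm hUI x
end

section
/- Let d ≥ 1 and p ∈ (0,1). Let I = (I_1,…,I_d) and I' = (I'_1,…,I'_d) be {0,1}^d-valued random vectors with P(I_j = 1) = P(I'_j = 1) = p for all j. Let U_{0,1},…,U_{0,d},U_{1,1},…,U_{1,d} be i.i.d. uniform on [0,1] independent of I, and similarly U'_{0,1},…,U'_{0,d},U'_{1,1},…,U'_{1,d} i.i.d. uniform on [0,1] independent of I'. Set U_j = U_{0,j}^{1−p} U_{1,j}^{I_j} and U'_j = U'_{0,j}^{1−p} (U'_{1,j})^{I'_j}. If Σ_{j=1}^d I_j and Σ_{j=1}^d I'_j have the same distribution, then Σ_{j=1}^d U_j and Σ_{j=1}^d U'_j have the same distribution. -/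
open MeasureTheory ProbabilityTheory

namespace GFGMAux

/-- The law of an independent family, bundled as a function-valued random variable,
is the product of the marginal laws. -/
lemma map_fun_eq_pi {Ω : Type*} [MeasurableSpace Ω] {ι : Type*} [Fintype ι]
    {E : Type*} [MeasurableSpace E]
    (μ : Measure Ω) [IsProbabilityMeasure μ]
    (f : ι → Ω → E) (hm : ∀ i, Measurable (f i))
    (h : iIndepFun f μ) :
    Measure.map (fun ω i => f i ω) μ = Measure.pi (fun i => Measure.map (f i) μ) := by
  haveI : ∀ i, IsProbabilityMeasure (Measure.map (f i) μ) :=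
    fun i => Measure.isProbabilityMeasure_map (hm i).aemeasurable
  refine (Measure.pi_eq fun s hs => ?_).symm
  rw [Measure.map_apply (measurable_pi_lambda _ fun i => hm i) (MeasurableSet.univ_pi hs)]
  have hpre : (fun ω i => f i ω) ⁻¹' Set.pi Set.univ s = ⋂ i ∈ Finset.univ, f i ⁻¹' s i := by
    ext ω; simp [Set.mem_pi]
  rw [hpre, h.measure_inter_preimage_eq_mul Finset.univ (fun i _ => hs i)]
  exact Finset.prod_congr rfl fun i _ => (Measure.map_apply (hm i) (hs i)).symm

/-- The uniform measure on `[0,1]`. -/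
noncomputable def mU : Measure ℝ := volume.restrict (Set.Icc 0 1)

instance : IsProbabilityMeasure mU := ⟨by simp [mU, Real.volume_Icc]⟩

/-- The law of the full family of iid uniforms. -/
noncomputable def nu (d : ℕ) : Measure ((Bool × Fin d) → ℝ) := Measure.pi fun _ => mU

instance (d : ℕ) : IsProbabilityMeasure (nu d) := by unfold nu; infer_instance

/-- Invariance of the iid product measure under relabeling coordinates. -/
lemma nu_map_comp (d : ℕ) (e : (Bool × Fin d) ≃ (Bool × Fin d)) :
    Measure.map (fun u (i : Bool × Fin d) => u (e i)) (nu d) = nu d := by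
  have hFmeas : Measurable (fun (u : (Bool × Fin d) → ℝ) (i : Bool × Fin d) => u (e i)) :=
    measurable_pi_lambda _ fun i => measurable_pi_apply _
  refine (Measure.pi_eq fun s hs => ?_).symm
  rw [Measure.map_apply hFmeas (MeasurableSet.univ_pi hs)]
  have hpre : (fun (u : (Bool × Fin d) → ℝ) (i : Bool × Fin d) => u (e i)) ⁻¹'
      Set.pi Set.univ s = Set.pi Set.univ (fun i => s (e.symm i)) := by
    ext u
    simp only [Set.mem_preimage, Set.mem_pi, Set.mem_univ, forall_true_left, true_implies]
    constructor
    · intro h i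
      simpa using h (e.symm i)
    · intro h i
      simpa using h (e i)
  rw [hpre]
  show (Measure.pi fun _ => mU) (Set.univ.pi fun i => s (e.symm i)) = _
  rw [Measure.pi_pi]
  exact Equiv.prod_comp e.symm (fun i => mU (s i))

/-- The sum functional. -/
noncomputable def S (d : ℕ) (p : ℝ) (u : (Bool × Fin d) → ℝ) (b : Fin d → Bool) : ℝ :=
  ∑ j, u (false, j) ^ (1 - p) * (if b j then u (true, j) else 1)

/-- The number of `true` coordinates. -/
def N (d : ℕ) (b : Fin d → Bool) : ℕ := ∑ j, if b j then 1 else 0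

/-- A canonical Boolean vector with `n` coordinates equal to `true`. -/
def rep (d n : ℕ) : Fin d → Bool := fun j => decide ((j : ℕ) < n)

lemma S_meas (d : ℕ) (p : ℝ) (hp : p ≤ 1) :
    Measurable (fun x : ((Bool × Fin d) → ℝ) × (Fin d → Bool) => S d p x.1 x.2) := by
  refine Finset.measurable_sum _ fun j _ => Measurable.mul ?_ ?_
  · exact (Real.continuous_rpow_const (by linarith)).measurable.comp
      ((measurable_pi_apply _).comp measurable_fst)
  · refine Measurable.ite ?_ ((measurable_pi_apply _).comp measurable_fst) measurable_const
    have h1 : {x : ((Bool × Fin d) → ℝ) × (Fin d → Bool) | x.2 j = true}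
        = (fun x : ((Bool × Fin d) → ℝ) × (Fin d → Bool) => x.2 j) ⁻¹' {true} := rfl
    rw [h1]
    exact ((measurable_pi_apply j).comp measurable_snd) (measurableSet_singleton true)

lemma Sb_meas (d : ℕ) (p : ℝ) (hp : p ≤ 1) (b : Fin d → Bool) :
    Measurable (fun u => S d p u b) :=
  (S_meas d p hp).comp (measurable_id.prodMk measurable_const)

lemma N_meas (d : ℕ) : Measurable (N d) := by
  refine Finset.measurable_sum _ fun j _ => ?_
  refine Measurable.ite ?_ measurable_const measurable_const
  have h1 : {b : Fin d → Bool | b j = true} = (fun b : Fin d → Bool => b j) ⁻¹' {true} := rfl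
  rw [h1]
  exact (measurable_pi_apply j) (measurableSet_singleton true)

lemma N_card (d : ℕ) (b : Fin d → Bool) :
    N d b = (Finset.univ.filter fun j => b j = true).card := by
  rw [Finset.card_filter]; rfl

lemma N_le (d : ℕ) (b : Fin d → Bool) : N d b ≤ d := by
  rw [N_card]
  calc (Finset.univ.filter fun j => b j = true).card ≤ Finset.univ.card :=
        Finset.card_filter_le _ _
    _ = d := by simp

lemma N_rep (d n : ℕ) (hn : n ≤ d) : N d (rep d n) = n := by
  rw [N_card]
  have : (Finset.univ.filter fun j : Fin d => rep d n j = true)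
      = Finset.map (Fin.castLEEmb hn) Finset.univ := by
    ext j
    simp only [Finset.mem_filter, Finset.mem_univ, true_and, Finset.mem_map,
      Fin.castLEEmb, rep, decide_eq_true_eq]
    constructor
    · intro h
      exact ⟨⟨(j : ℕ), h⟩, by ext; simp [Fin.castLE]⟩
    · rintro ⟨k, rfl⟩
      simp [Fin.castLE, k.isLt]
  rw [this, Finset.card_map]
  simp

/-- Exchangeability: the law of `S (·, b)` under `nu` only depends on the
number of `true` coordinates of `b`. -/
lemma map_S_eq (d : ℕ) (p : ℝ) (hp : p ≤ 1) {b b' : Fin d → Bool} (h : N d b = N d b') :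
    Measure.map (fun u => S d p u b) (nu d) = Measure.map (fun u => S d p u b') (nu d) := by
  classical
  have hcard : Fintype.card {j : Fin d // b' j = true} = Fintype.card {j : Fin d // b j = true} := by
    rw [Fintype.card_subtype, Fintype.card_subtype, ← N_card, ← N_card, h]
  have hcardc : Fintype.card {j : Fin d // ¬ b' j = true}
      = Fintype.card {j : Fin d // ¬ b j = true} := by
    rw [Fintype.card_subtype_compl, Fintype.card_subtype_compl, hcard]
  let e := Fintype.equivOfCardEq hcard
  let f := Fintype.equivOfCardEq hcardc
  let σ : Equiv.Perm (Fin d) := Equiv.subtypeCongr e f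
  have hσ : ∀ j, b (σ j) = b' j := by
    intro j
    by_cases h' : b' j = true
    · have h1 : σ j = ((e ⟨j, h'⟩ : {j : Fin d // b j = true}) : Fin d) := by
        simp [σ, Equiv.subtypeCongr, h']
      rw [h1, (e ⟨j, h'⟩).2, h']
    · have h1 : σ j = ((f ⟨j, h'⟩ : {j : Fin d // ¬ b j = true}) : Fin d) := by
        simp [σ, Equiv.subtypeCongr, h']
      rw [h1]
      have h2 := (f ⟨j, h'⟩).2
      simp only [Bool.not_eq_true] at h2 h'
      rw [h2, h']
  let E : (Bool × Fin d) ≃ (Bool × Fin d) := (Equiv.refl Bool).prodCongr σ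
  let F : ((Bool × Fin d) → ℝ) → (Bool × Fin d) → ℝ := fun u i => u (E i)
  have hF : Measure.map F (nu d) = nu d := nu_map_comp d E
  have hFmeas : Measurable F := measurable_pi_lambda _ fun i => measurable_pi_apply _
  have hcomp : ∀ u, S d p (F u) b' = S d p u b := by
    intro u
    show (∑ j, (u (false, σ j)) ^ (1 - p) * (if b' j then u (true, σ j) else 1))
      = ∑ j, u (false, j) ^ (1 - p) * (if b j then u (true, j) else 1)
    rw [← Equiv.sum_comp σ (fun k => u (false, k) ^ (1 - p) * (if b k then u (true, k) else 1))]
    exact Finset.sum_congr rfl fun j _ => by rw [hσ j]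
  calc Measure.map (fun u => S d p u b) (nu d)
      = Measure.map (fun u => S d p (F u) b') (nu d) := by
        congr 1; funext u; exact (hcomp u).symm
    _ = Measure.map (fun u => S d p u b') (Measure.map F (nu d)) :=
        (Measure.map_map (Sb_meas d p hp b') hFmeas).symm
    _ = Measure.map (fun u => S d p u b') (nu d) := by rw [hF]

/-- The law of the sum for the canonical Boolean vector with `n` successes. -/
noncomputable def G (d : ℕ) (p : ℝ) (n : ℕ) : Measure ℝ :=
  Measure.map (fun u => S d p u (rep d n)) (nu d)

lemma map_Sb_eq_G (d : ℕ) (p : ℝ) (hp : p ≤ 1) (b : Fin d → Bool) :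
    Measure.map (fun u => S d p u b) (nu d) = G d p (N d b) :=
  map_S_eq d p hp ((N_rep d (N d b) (N_le d b)).symm)

/-- Core disintegration step: the law of `S` under `nu ⊗ τ` only depends on
the law of `N` under `τ`. -/
lemma core (d : ℕ) (p : ℝ) (hp : p ≤ 1)
    (τ τ' : Measure (Fin d → Bool)) [IsFiniteMeasure τ] [IsFiniteMeasure τ']
    (h : Measure.map (N d) τ = Measure.map (N d) τ') :
    Measure.map (fun x : ((Bool × Fin d) → ℝ) × (Fin d → Bool) => S d p x.1 x.2) ((nu d).prod τ)
      = Measure.map (fun x : ((Bool × Fin d) → ℝ) × (Fin d → Bool) => S d p x.1 x.2)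
          ((nu d).prod τ') := by
  have hSm := S_meas d p hp
  ext A hA
  rw [Measure.map_apply hSm hA, Measure.map_apply hSm hA,
    Measure.prod_apply_symm (hSm hA), Measure.prod_apply_symm (hSm hA)]
  have key : ∀ (τ₀ : Measure (Fin d → Bool)),
      ∫⁻ b, (nu d) ((fun u => (u, b)) ⁻¹'
          ((fun x : ((Bool × Fin d) → ℝ) × (Fin d → Bool) => S d p x.1 x.2) ⁻¹' A)) ∂τ₀
        = ∫⁻ n, G d p n A ∂(Measure.map (N d) τ₀) := by
    intro τ₀
    rw [lintegral_map (measurable_of_countable _) (N_meas d)]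
    refine lintegral_congr fun b => ?_
    have h1 : (fun u => (u, b)) ⁻¹'
        ((fun x : ((Bool × Fin d) → ℝ) × (Fin d → Bool) => S d p x.1 x.2) ⁻¹' A)
        = (fun u => S d p u b) ⁻¹' A := rfl
    rw [h1, ← Measure.map_apply (Sb_meas d p hp b) hA, map_Sb_eq_G d p hp b]
  rw [key τ, key τ', h]

end GFGMAux

/-- if two Bernoulli vectors with common margin `p` have sums with the
same distribution, then the sums of the components of the corresponding uniform
vectors with GFGM(p) copulas have the same distribution. -/
theorem gfgm_sum_eq_distrib_of_bernoulli_sum_eq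
    {Ω : Type*} [MeasurableSpace Ω] (μ : Measure Ω) [IsProbabilityMeasure μ]
    {Ω' : Type*} [MeasurableSpace Ω'] (μ' : Measure Ω') [IsProbabilityMeasure μ']
    (d : ℕ) (hd : 1 ≤ d) (p : ℝ) (hp : p ∈ Set.Ioo (0 : ℝ) 1)
    (U : Bool × Fin d → Ω → ℝ) (hUm : ∀ i, Measurable (U i))
    (hUunif : ∀ i, Measure.map (U i) μ = volume.restrict (Set.Icc (0 : ℝ) 1))
    (hUindep : iIndepFun U μ)
    (I : Ω → Fin d → Bool) (hIm : Measurable I)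
    (hIp : ∀ j, μ {ω | I ω j = true} = ENNReal.ofReal p)
    (hUI : IndepFun (fun ω => fun i => U i ω) I μ)
    (U' : Bool × Fin d → Ω' → ℝ) (hU'm : ∀ i, Measurable (U' i))
    (hU'unif : ∀ i, Measure.map (U' i) μ' = volume.restrict (Set.Icc (0 : ℝ) 1))
    (hU'indep : iIndepFun U' μ')
    (I' : Ω' → Fin d → Bool) (hI'm : Measurable I')
    (hI'p : ∀ j, μ' {ω | I' ω j = true} = ENNReal.ofReal p)
    (hU'I' : IndepFun (fun ω => fun i => U' i ω) I' μ')
    (hsum : Measure.map (fun ω => ∑ j, (if I ω j then (1 : ℕ) else 0)) μ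
      = Measure.map (fun ω => ∑ j, (if I' ω j then (1 : ℕ) else 0)) μ') :
    Measure.map
        (fun ω => ∑ j, U (false, j) ω ^ (1 - p) * (if I ω j then U (true, j) ω else 1)) μ
      = Measure.map
        (fun ω => ∑ j, U' (false, j) ω ^ (1 - p) * (if I' ω j then U' (true, j) ω else 1)) μ' := by
  classical
  obtain ⟨hp0, hp1⟩ := hp
  have hple : p ≤ 1 := le_of_lt hp1
  -- the law of the uniform vector is the product measure
  have hUlaw : Measure.map (fun ω i => U i ω) μ = GFGMAux.nu d := by
    rw [GFGMAux.map_fun_eq_pi μ U hUm hUindep]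
    exact congrArg Measure.pi (funext fun i => (hUunif i))
  have hU'law : Measure.map (fun ω i => U' i ω) μ' = GFGMAux.nu d := by
    rw [GFGMAux.map_fun_eq_pi μ' U' hU'm hU'indep]
    exact congrArg Measure.pi (funext fun i => (hU'unif i))
  -- the joint law of the uniform vector and the Bernoulli vector
  have hpairm : Measurable (fun ω => ((fun i => U i ω), I ω)) :=
    (measurable_pi_lambda _ fun i => hUm i).prodMk hIm
  have hpair'm : Measurable (fun ω => ((fun i => U' i ω), I' ω)) :=
    (measurable_pi_lambda _ fun i => hU'm i).prodMk hI'm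
  have hpair : Measure.map (fun ω => ((fun i => U i ω), I ω)) μ
      = (GFGMAux.nu d).prod (Measure.map I μ) := by
    rw [← hUlaw]
    exact (indepFun_iff_map_prod_eq_prod_map_map
      (measurable_pi_lambda _ fun i => hUm i).aemeasurable hIm.aemeasurable).mp hUI
  have hpair' : Measure.map (fun ω => ((fun i => U' i ω), I' ω)) μ'
      = (GFGMAux.nu d).prod (Measure.map I' μ') := by
    rw [← hU'law]
    exact (indepFun_iff_map_prod_eq_prod_map_map
      (measurable_pi_lambda _ fun i => hU'm i).aemeasurable hI'm.aemeasurable).mp hU'I'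
  -- rewrite both sides through the joint law
  have hL : Measure.map
      (fun ω => ∑ j, U (false, j) ω ^ (1 - p) * (if I ω j then U (true, j) ω else 1)) μ
      = Measure.map (fun x : ((Bool × Fin d) → ℝ) × (Fin d → Bool) => GFGMAux.S d p x.1 x.2)
          ((GFGMAux.nu d).prod (Measure.map I μ)) := by
    have h1 := Measure.map_map (μ := μ) (GFGMAux.S_meas d p hple) hpairm
    rw [hpair] at h1
    exact h1.symm
  have hL' : Measure.map
      (fun ω => ∑ j, U' (false, j) ω ^ (1 - p) * (if I' ω j then U' (true, j) ω else 1)) μ'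
      = Measure.map (fun x : ((Bool × Fin d) → ℝ) × (Fin d → Bool) => GFGMAux.S d p x.1 x.2)
          ((GFGMAux.nu d).prod (Measure.map I' μ')) := by
    have h1 := Measure.map_map (μ := μ') (GFGMAux.S_meas d p hple) hpair'm
    rw [hpair'] at h1
    exact h1.symm
  -- equality of the counting laws
  have hNlaw : Measure.map (GFGMAux.N d) (Measure.map I μ)
      = Measure.map (GFGMAux.N d) (Measure.map I' μ') := by
    rw [Measure.map_map (GFGMAux.N_meas d) hIm, Measure.map_map (GFGMAux.N_meas d) hI'm]
    exact hsum
  haveI : IsProbabilityMeasure (Measure.map I μ) := Measure.isProbabilityMeasure_map hIm.aemeasurable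
  haveI : IsProbabilityMeasure (Measure.map I' μ') := Measure.isProbabilityMeasure_map hI'm.aemeasurable
  rw [hL, hL']
  exact GFGMAux.core d p hple _ _ hNlaw
end

section
/- Let d ≥ 1 and m ∈ [0, d]. Every probability mass function g on {0, 1, …, d} with mean Σ_{k=0}^d k·g(k) = m is a finite convex combination of the following extremal probability mass functions: the two-point pmfs r_{k_1,k_2} with integers 0 ≤ k_1 < m < k_2 ≤ d defined by r_{k_1,k_2}(k_1) = (k_2 − m)/(k_2 − k_1), r_{k_1,k_2}(k_2) = (m − k_1)/(k_2 − k_1), and r_{k_1,k_2}(y) = 0 otherwise, together with, when m is an integer, the point mass at m. -/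
open MeasureTheory

/-- every pmf on `{0,…,d}` with mean `m` is a convex combination of the
two-point extremal pmfs `r_{k₁,k₂}` (with `0 ≤ k₁ < m < k₂ ≤ d`) and, when `m` is an
integer, the point mass at `m`. -/
theorem pmf_mean_convex_decomposition
    (d : ℕ) (hd : 1 ≤ d) (m : ℝ) (hm : m ∈ Set.Icc (0 : ℝ) d)
    (g : ℕ → ℝ) (hg0 : ∀ k, 0 ≤ g k) (hgsupp : ∀ k, d < k → g k = 0)
    (hgsum : ∑ k ∈ Finset.range (d + 1), g k = 1)
    (hgmean : ∑ k ∈ Finset.range (d + 1), (k : ℝ) * g k = m) :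
    ∃ (lam : ℕ × ℕ → ℝ) (lam0 : ℝ),
      (∀ q, 0 ≤ lam q) ∧ 0 ≤ lam0 ∧
      ((¬ ∃ n : ℕ, (n : ℝ) = m) → lam0 = 0) ∧
      ((∑ q ∈ (Finset.range (d + 1) ×ˢ Finset.range (d + 1)).filter
          (fun q => (q.1 : ℝ) < m ∧ m < (q.2 : ℝ)), lam q) + lam0 = 1) ∧
      (∀ y : ℕ, g y =
        (∑ q ∈ (Finset.range (d + 1) ×ˢ Finset.range (d + 1)).filter
            (fun q => (q.1 : ℝ) < m ∧ m < (q.2 : ℝ)),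
          lam q * (if y = q.1 then ((q.2 : ℝ) - m) / ((q.2 : ℝ) - (q.1 : ℝ))
                   else if y = q.2 then (m - (q.1 : ℝ)) / ((q.2 : ℝ) - (q.1 : ℝ))
                   else 0))
        + lam0 * (if (y : ℝ) = m then 1 else 0)) := by
  classical
  obtain ⟨hm0, hmd⟩ := hm
  set F : Finset ℕ := Finset.range (d+1) with hF
  set A : Finset ℕ := F.filter (fun k => (k:ℝ) < m) with hAdef
  set B : Finset ℕ := F.filter (fun k => m < (k:ℝ)) with hBdef
  set E : Finset ℕ := F.filter (fun k => (k:ℝ) = m) with hEdef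
  have memA : ∀ k ∈ A, (k:ℝ) < m := fun k hk => (Finset.mem_filter.1 hk).2
  have memB : ∀ k ∈ B, m < (k:ℝ) := fun k hk => (Finset.mem_filter.1 hk).2
  have memAd : ∀ k ∈ A, k ≤ d := fun k hk => by
    have h := (Finset.mem_filter.1 hk).1
    rw [hF, Finset.mem_range] at h; omega
  have memBd : ∀ k ∈ B, k ≤ d := fun k hk => by
    have h := (Finset.mem_filter.1 hk).1
    rw [hF, Finset.mem_range] at h; omega
  have hABd : Disjoint A B := by
    rw [Finset.disjoint_left]
    intro k hkA hkB
    exact absurd (memB k hkB) (not_lt.2 (memA k hkA).le)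
  have hABEd : Disjoint (A ∪ B) E := by
    rw [Finset.disjoint_left]
    intro k hk hkE
    have hE : (k:ℝ) = m := (Finset.mem_filter.1 hkE).2
    rcases Finset.mem_union.1 hk with h | h
    · exact absurd hE (ne_of_lt (memA k h))
    · exact absurd hE.symm (ne_of_lt (memB k h))
  have hunion : A ∪ B ∪ E = F := by
    ext k
    simp only [Finset.mem_union, hAdef, hBdef, hEdef, Finset.mem_filter]
    constructor
    · rintro ((h | h) | h) <;> exact h.1
    · intro hk
      rcases lt_trichotomy ((k:ℝ)) m with h | h | h
      · exact Or.inl (Or.inl ⟨hk, h⟩)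
      · exact Or.inr ⟨hk, h⟩
      · exact Or.inl (Or.inr ⟨hk, h⟩)
  have hsplit : ∀ f : ℕ → ℝ,
      ∑ k ∈ A, f k + ∑ k ∈ B, f k + ∑ k ∈ E, f k = ∑ k ∈ F, f k := by
    intro f
    rw [← hunion, Finset.sum_union hABEd, Finset.sum_union hABd]
  set S : ℝ := ∑ k ∈ B, ((k:ℝ) - m) * g k with hSdef
  have hS0 : 0 ≤ S := Finset.sum_nonneg (fun k hk =>
    mul_nonneg (by linarith [memB k hk]) (hg0 k))
  have hmean0 : ∑ k ∈ F, ((k:ℝ) - m) * g k = 0 := by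
    simp only [sub_mul]
    rw [Finset.sum_sub_distrib, hgmean, ← Finset.mul_sum, hgsum, mul_one, sub_self]
  have hE0 : ∑ k ∈ E, ((k:ℝ) - m) * g k = 0 := Finset.sum_eq_zero (fun k hk => by
    rw [(Finset.mem_filter.1 hk).2, sub_self, zero_mul])
  have hT : ∑ k ∈ A, (m - (k:ℝ)) * g k = S := by
    have h1 := hsplit (fun k => ((k:ℝ) - m) * g k)
    rw [hmean0, hE0, ← hSdef] at h1
    have h2 : ∑ k ∈ A, (m - (k:ℝ)) * g k = -∑ k ∈ A, ((k:ℝ) - m) * g k := by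
      rw [← Finset.sum_neg_distrib]
      exact Finset.sum_congr rfl (fun k _ => by ring)
    rw [h2]; linarith
  have hScomm : ∑ k ∈ B, g k * ((k:ℝ) - m) = S := by
    rw [hSdef]
    exact Finset.sum_congr rfl (fun k _ => mul_comm _ _)
  -- behavior when S = 0
  have hA0 : S = 0 → ∀ k ∈ A, g k = 0 := by
    intro hS k hk
    have h := (Finset.sum_eq_zero_iff_of_nonneg (fun k hk =>
      mul_nonneg (by linarith [memA k hk]) (hg0 k))).1 (hT.trans hS) k hk
    have hne : m - (k:ℝ) ≠ 0 := by have := memA k hk; intro hc; linarith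
    exact (mul_eq_zero.1 h).resolve_left hne
  have hB0 : S = 0 → ∀ k ∈ B, g k = 0 := by
    intro hS k hk
    have h := (Finset.sum_eq_zero_iff_of_nonneg (fun k hk =>
      mul_nonneg (by linarith [memB k hk]) (hg0 k))).1 (hSdef ▸ hS) k hk
    have hne : (k:ℝ) - m ≠ 0 := by have := memB k hk; intro hc; linarith
    exact (mul_eq_zero.1 h).resolve_left hne
  set n0 : ℕ := Nat.floor m with hn0
  set lam0 : ℝ := if (n0:ℝ) = m then g n0 else 0 with hlam0
  have hlam0E : lam0 = ∑ k ∈ E, g k := by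
    by_cases hint : (n0:ℝ) = m
    · have hEeq : E = {n0} := by
        ext k
        simp only [hEdef, Finset.mem_filter, Finset.mem_singleton, hF, Finset.mem_range]
        constructor
        · rintro ⟨_, hk⟩
          exact_mod_cast hk.trans hint.symm
        · rintro rfl
          refine ⟨?_, hint⟩
          have h1 : n0 ≤ d := by
            have h2 := Nat.floor_le_floor hmd
            rwa [Nat.floor_natCast] at h2
          omega
      rw [hEeq, Finset.sum_singleton, hlam0, if_pos hint]
    · have hEeq : E = ∅ := by
        ext k
        simp only [hEdef, Finset.mem_filter, Finset.notMem_empty, iff_false, not_and]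
        intro _ hk
        have : n0 = k := by rw [hn0, ← hk, Nat.floor_natCast]
        exact hint (by rw [this, hk])
      rw [hEeq, Finset.sum_empty, hlam0, if_neg hint]
  set lam : ℕ × ℕ → ℝ := fun q =>
    if (q.1:ℝ) < m ∧ m < (q.2:ℝ) then g q.1 * g q.2 * ((q.2:ℝ) - (q.1:ℝ)) / S else 0
    with hlam
  have hPeq : (F ×ˢ F).filter (fun q => (q.1 : ℝ) < m ∧ m < (q.2 : ℝ)) = A ×ˢ B := by
    rw [hAdef, hBdef]
    exact Finset.filter_product (fun k : ℕ => (k:ℝ) < m) (fun k : ℕ => m < (k:ℝ))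
  have hlamval : ∀ k1 ∈ A, ∀ k2 ∈ B,
      lam (k1, k2) = g k1 * g k2 * ((k2:ℝ) - (k1:ℝ)) / S := by
    intro k1 h1 k2 h2
    rw [hlam]
    exact if_pos ⟨memA k1 h1, memB k2 h2⟩
  refine ⟨lam, lam0, ?_, ?_, ?_, ?_, ?_⟩
  · intro q
    rw [hlam]
    dsimp only
    split_ifs with h
    · exact div_nonneg (mul_nonneg (mul_nonneg (hg0 _) (hg0 _))
        (by linarith [h.1, h.2])) hS0
    · exact le_rfl
  · rw [hlam0]; split_ifs; exacts [hg0 _, le_rfl]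
  · intro h
    rw [hlam0, if_neg (fun hc => h ⟨n0, hc⟩)]
  · -- total mass
    rw [hPeq, Finset.sum_product]
    have key : ∑ k1 ∈ A, ∑ k2 ∈ B, lam (k1, k2)
        = (∑ k ∈ A, g k) * (S / S) + S * (∑ k ∈ B, g k) / S := by
      have hin : ∀ k1 ∈ A, ∑ k2 ∈ B, lam (k1, k2)
          = g k1 * (S / S) + (m - (k1:ℝ)) * g k1 * (∑ k ∈ B, g k) / S := by
        intro k1 h1
        have : ∀ k2 ∈ B, lam (k1, k2)
            = g k1 * (g k2 * ((k2:ℝ) - m)) / S + (m - (k1:ℝ)) * g k1 * g k2 / S := by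
          intro k2 h2
          rw [hlamval k1 h1 k2 h2]; ring
        rw [Finset.sum_congr rfl this, Finset.sum_add_distrib]
        congr 1
        · rw [← Finset.sum_div, ← Finset.mul_sum, hScomm, mul_div_assoc]
        · rw [← Finset.sum_div, ← Finset.mul_sum]
      rw [Finset.sum_congr rfl hin, Finset.sum_add_distrib]
      congr 1
      · rw [← Finset.sum_mul]
      · rw [← Finset.sum_div, ← Finset.sum_mul, hT]
    rw [key, hlam0E]
    have hGS := hsplit g
    rw [hgsum] at hGS
    rcases eq_or_ne S 0 with hS | hS
    · have hAz : ∑ k ∈ A, g k = 0 := Finset.sum_eq_zero (hA0 hS)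
      have hBz : ∑ k ∈ B, g k = 0 := Finset.sum_eq_zero (hB0 hS)
      rw [hAz, hBz] at hGS ⊢
      simp only [zero_mul, mul_zero, zero_div, zero_add]
      linarith
    · rw [div_self hS, mul_one, mul_div_cancel_left₀ _ hS]
      linarith
  · -- pointwise identity
    intro y
    rw [hPeq, Finset.sum_product]
    by_cases hyd : d < y
    · have hymge : (d:ℝ) < (y:ℝ) := by exact_mod_cast hyd
      have hne : ¬ ((y:ℝ) = m) := by intro hc; linarith
      rw [hgsupp y hyd, Finset.sum_eq_zero, if_neg hne, mul_zero, add_zero]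
      intro k1 h1
      refine Finset.sum_eq_zero (fun k2 h2 => ?_)
      have hy1 : y ≠ k1 := fun hc => by have := memAd k1 h1; omega
      have hy2 : y ≠ k2 := fun hc => by have := memBd k2 h2; omega
      rw [if_neg hy1, if_neg hy2, mul_zero]
    · push_neg at hyd
      have hyF : y ∈ F := by rw [hF, Finset.mem_range]; omega
      rcases lt_trichotomy ((y:ℝ)) m with hy | hy | hy
      · -- y strictly below the mean
        have hyA : y ∈ A := Finset.mem_filter.2 ⟨hyF, hy⟩
        have hne : ¬ ((y:ℝ) = m) := ne_of_lt hy
        rw [if_neg hne, mul_zero, add_zero]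
        rw [Finset.sum_eq_single_of_mem y hyA (fun k1 h1 hk1 => ?_)]
        · have hterm : ∀ k2 ∈ B,
              lam (y, k2) * (if y = y then ((k2:ℝ) - m) / ((k2:ℝ) - (y:ℝ))
                else if y = k2 then (m - (y:ℝ)) / ((k2:ℝ) - (y:ℝ)) else 0)
              = g y * (g k2 * ((k2:ℝ) - m)) / S := by
            intro k2 h2
            have hk2 := memB k2 h2
            have hden : (k2:ℝ) - (y:ℝ) ≠ 0 := by intro hc; linarith
            rw [if_pos rfl, hlamval y hyA k2 h2]
            have h3 : g y * g k2 * ((k2:ℝ) - (y:ℝ)) / S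
                * (((k2:ℝ) - m) / ((k2:ℝ) - (y:ℝ)))
                = g y * g k2 / S * (((k2:ℝ) - m) / ((k2:ℝ) - (y:ℝ)) * ((k2:ℝ) - (y:ℝ))) := by
              ring
            rw [h3, div_mul_cancel₀ _ hden]
            ring
          rw [Finset.sum_congr rfl hterm]
          rw [← Finset.sum_div, ← Finset.mul_sum, hScomm]
          rcases eq_or_ne S 0 with hS | hS
          · rw [hA0 hS y hyA, hS, zero_mul, zero_div]
          · rw [mul_div_assoc, div_self hS, mul_one]
        · refine Finset.sum_eq_zero (fun k2 h2 => ?_)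
          have hy1 : y ≠ k1 := fun hc => hk1 hc.symm
          have hy2 : y ≠ k2 := fun hc => by
            have := memB k2 h2; rw [← hc] at this; linarith
          rw [if_neg hy1, if_neg hy2, mul_zero]
      · -- y equals the mean
        have hEsum : ∀ k1 ∈ A, (∑ k2 ∈ B,
            lam (k1, k2) * (if y = k1 then ((k2:ℝ) - m) / ((k2:ℝ) - (k1:ℝ))
              else if y = k2 then (m - (k1:ℝ)) / ((k2:ℝ) - (k1:ℝ)) else 0)) = 0 := by
          intro k1 h1
          refine Finset.sum_eq_zero (fun k2 h2 => ?_)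
          have hy1 : y ≠ k1 := fun hc => by
            have := memA k1 h1; rw [← hc] at this; linarith
          have hy2 : y ≠ k2 := fun hc => by
            have := memB k2 h2; rw [← hc] at this; linarith
          rw [if_neg hy1, if_neg hy2, mul_zero]
        rw [Finset.sum_eq_zero hEsum, if_pos hy, mul_one, zero_add]
        have hn0y : n0 = y := by rw [hn0, ← hy, Nat.floor_natCast]
        rw [hlam0, hn0y, if_pos hy]
      · -- y strictly above the mean
        have hyB : y ∈ B := Finset.mem_filter.2 ⟨hyF, hy⟩
        have hne : ¬ ((y:ℝ) = m) := ne_of_gt hy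
        rw [if_neg hne, mul_zero, add_zero, Finset.sum_comm]
        rw [Finset.sum_eq_single_of_mem y hyB (fun k2 h2 hk2 => ?_)]
        · have hterm : ∀ k1 ∈ A,
              lam (k1, y) * (if y = k1 then ((y:ℝ) - m) / ((y:ℝ) - (k1:ℝ))
                else if y = y then (m - (k1:ℝ)) / ((y:ℝ) - (k1:ℝ)) else 0)
              = g y * ((m - (k1:ℝ)) * g k1) / S := by
            intro k1 h1
            have hk1 := memA k1 h1
            have hy1 : y ≠ k1 := fun hc => by rw [← hc] at hk1; linarith
            have hden : (y:ℝ) - (k1:ℝ) ≠ 0 := by intro hc; linarith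
            rw [if_neg hy1, if_pos rfl, hlamval k1 h1 y hyB]
            have h3 : g k1 * g y * ((y:ℝ) - (k1:ℝ)) / S
                * ((m - (k1:ℝ)) / ((y:ℝ) - (k1:ℝ)))
                = g k1 * g y / S * ((m - (k1:ℝ)) / ((y:ℝ) - (k1:ℝ)) * ((y:ℝ) - (k1:ℝ))) := by
              ring
            rw [h3, div_mul_cancel₀ _ hden]
            ring
          rw [Finset.sum_congr rfl hterm]
          rw [← Finset.sum_div, ← Finset.mul_sum, hT]
          rcases eq_or_ne S 0 with hS | hS
          · rw [hB0 hS y hyB, hS, zero_mul, zero_div]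
          · rw [mul_div_assoc, div_self hS, mul_one]
        · refine Finset.sum_eq_zero (fun k1 h1 => ?_)
          have hy1 : y ≠ k1 := fun hc => by
            have := memA k1 h1; rw [← hc] at this; linarith
          have hy2 : y ≠ k2 := fun hc => hk2 hc.symm
          rw [if_neg hy1, if_neg hy2, mul_zero]
end

section
/- Let d ≥ 1 and p ∈ (0,1). Let I and I' be {0,1}^d-valued random vectors with P(I_j = 1) = P(I'_j = 1) = p for all j. Let U_{0,1},…,U_{0,d},U_{1,1},…,U_{1,d} be i.i.d. uniform on [0,1] independent of I, and let U'_{0,1},…,U'_{0,d},U'_{1,1},…,U'_{1,d} be i.i.d. uniform on [0,1] independent of I'. Set U_j = U_{0,j}^{1−p} U_{1,j}^{I_j} and U'_j = U'_{0,j}^{1−p} (U'_{1,j})^{I'_j}. If E[φ(Σ_{j=1}^d I_j)] ≤ E[φ(Σ_{j=1}^d I'_j)] for every convex function φ : ℝ → ℝ, then E[ψ(Σ_{j=1}^d U_j)] ≤ E[ψ(Σ_{j=1}^d U'_j)] for every convex function ψ : ℝ → ℝ for which both expectations exist and are finite. -/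
open MeasureTheory ProbabilityTheory

lemma fourPoint {ψ : ℝ → ℝ} (hψ : ConvexOn ℝ Set.univ ψ) {x1 x2 x3 x4 : ℝ}
    (h42 : x4 ≤ x2) (h21 : x2 ≤ x1) (hsum : x2 + x3 = x1 + x4) :
    ψ x2 + ψ x3 ≤ ψ x1 + ψ x4 := by
  rcases eq_or_lt_of_le (h42.trans h21) with h | h
  · have hx2 : x2 = x1 := le_antisymm h21 (h ▸ h42)
    have hx3 : x3 = x4 := by linarith
    simp [hx2, hx3]
  · set t : ℝ := (x2 - x4) / (x1 - x4) with ht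
    have ht0 : 0 ≤ t := div_nonneg (by linarith) (by linarith)
    have ht1 : t ≤ 1 := (div_le_one (by linarith)).mpr (by linarith)
    have hne : x1 - x4 ≠ 0 := by linarith
    have h2 : x2 = (1 - t) * x4 + t * x1 := by
      have : (1 - t) * x4 + t * x1 = x4 + t * (x1 - x4) := by ring
      rw [this, ht, div_mul_cancel₀ _ hne]; ring
    have h3 : x3 = t * x4 + (1 - t) * x1 := by
      have : x3 = x1 + x4 - x2 := by linarith
      rw [this, h2]; ring
    have i2 := hψ.2 (Set.mem_univ x4) (Set.mem_univ x1) (by linarith : (0:ℝ) ≤ 1 - t) ht0 (by ring)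
    have i3 := hψ.2 (Set.mem_univ x4) (Set.mem_univ x1) ht0 (by linarith : (0:ℝ) ≤ 1 - t) (by ring)
    simp only [smul_eq_mul] at i2 i3
    rw [← h2] at i2
    rw [← h3] at i3
    linarith

lemma convexOn_affine (a b : ℝ) : ConvexOn ℝ Set.univ (fun x => a + b * x) := by
  refine ⟨convex_univ, fun x _ y _ s t hs ht hst => ?_⟩
  simp only [smul_eq_mul]
  have h1 : s = 1 - t := by linarith
  subst h1; apply le_of_eq; ring

lemma convexOn_hinge (m : ℝ) : ConvexOn ℝ Set.univ (fun x => max (x - m) 0) := by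
  have h : (fun x : ℝ => max (x - m) 0) = (fun x : ℝ => -m + 1 * x) ⊔ (fun _ => 0) := by
    funext x; simp [Pi.sup_apply]; ring_nf
  rw [h]
  exact (convexOn_affine (-m) 1).sup (convexOn_const 0 convex_univ)

lemma convexOn_pl (a b : ℝ) (c : ℕ → ℝ) (s : Finset ℕ) (hc : ∀ m ∈ s, 0 ≤ c m) :
    ConvexOn ℝ Set.univ (fun x => a + b * x + ∑ m ∈ s, c m * max (x - (m : ℝ)) 0) := by
  classical
  induction s using Finset.induction_on with
  | empty => simpa using convexOn_affine a b
  | @insert i s hi ih =>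
    have h : (fun x => a + b * x + ∑ m ∈ insert i s, c m * max (x - (m : ℝ)) 0)
        = (fun x => a + b * x + ∑ m ∈ s, c m * max (x - (m : ℝ)) 0)
          + (fun x => c i * max (x - (i : ℝ)) 0) := by
      funext x; simp [Finset.sum_insert hi]; ring
    rw [h]
    refine (ih fun m hm => hc m (Finset.mem_insert_of_mem hm)).add ?_
    have h2 : (fun x : ℝ => c i * max (x - (i : ℝ)) 0)
        = c i • (fun x : ℝ => max (x - (i : ℝ)) 0) := by funext x; simp
    rw [h2]
    exact (convexOn_hinge _).smul (hc i (Finset.mem_insert_self i s))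
lemma tele2 (g : ℕ → ℝ) (k : ℕ) :
    ∑ m ∈ Finset.Ico 1 (k + 1), (g (m + 1) + g (m - 1) - 2 * g m)
      = g (k + 1) - g k - (g 1 - g 0) := by
  induction k with
  | zero => simp
  | succ k ih =>
    rw [Finset.sum_Ico_succ_top (by omega : 1 ≤ k + 1), ih]
    simp only [Nat.add_sub_cancel]
    ring

lemma tele1 (g : ℕ → ℝ) (k : ℕ) :
    g 0 + (g 1 - g 0) * k
      + ∑ m ∈ Finset.Ico 1 k, (g (m + 1) + g (m - 1) - 2 * g m) * ((k : ℝ) - m)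
      = g k := by
  induction k with
  | zero => simp
  | succ k ih =>
    have hsplit : ∑ m ∈ Finset.Ico 1 (k + 1),
        (g (m + 1) + g (m - 1) - 2 * g m) * (((k + 1 : ℕ) : ℝ) - m)
        = (∑ m ∈ Finset.Ico 1 k, (g (m + 1) + g (m - 1) - 2 * g m) * ((k : ℝ) - m))
          + ∑ m ∈ Finset.Ico 1 (k + 1), (g (m + 1) + g (m - 1) - 2 * g m) := by
      rcases Nat.eq_zero_or_pos k with hk | hk
      · subst hk; simp
      · rw [Finset.sum_Ico_succ_top (by omega : 1 ≤ k),
          Finset.sum_Ico_succ_top (by omega : 1 ≤ k)]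
        have hterm : ∀ m ∈ Finset.Ico 1 k,
            (g (m + 1) + g (m - 1) - 2 * g m) * (((k + 1 : ℕ) : ℝ) - m)
              = (g (m + 1) + g (m - 1) - 2 * g m) * ((k : ℝ) - m)
                + (g (m + 1) + g (m - 1) - 2 * g m) := by
          intro m hm; push_cast; ring
        rw [Finset.sum_congr rfl hterm, Finset.sum_add_distrib]
        push_cast; ring
    rw [hsplit, tele2]
    push_cast
    push_cast at ih
    linarith
lemma exists_perm_of_card_eq {d : ℕ} (b b' : Fin d → Bool)
    (h : (Finset.univ.filter fun j => b j = true).card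
       = (Finset.univ.filter fun j => b' j = true).card) :
    ∃ σ : Fin d ≃ Fin d, ∀ j, b' j = b (σ j) := by
  classical
  have hc : (Finset.univ.filter fun j => ¬ (b j = true)).card
      = (Finset.univ.filter fun j => ¬ (b' j = true)).card := by
    have h1 := Finset.card_filter_add_card_filter_not
      (s := (Finset.univ : Finset (Fin d))) (p := fun j => b j = true)
    have h2 := Finset.card_filter_add_card_filter_not
      (s := (Finset.univ : Finset (Fin d))) (p := fun j => b' j = true)
    omega
  have e1 : {x : Fin d // b' x = true} ≃ {x : Fin d // b x = true} := by
    refine (Equiv.subtypeEquivRight fun x => ?_).trans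
      ((Finset.equivOfCardEq h.symm).trans (Equiv.subtypeEquivRight fun x => ?_)) <;> simp
  have e2 : {x : Fin d // ¬ (b' x = true)} ≃ {x : Fin d // ¬ (b x = true)} := by
    refine (Equiv.subtypeEquivRight fun x => ?_).trans
      ((Finset.equivOfCardEq hc.symm).trans (Equiv.subtypeEquivRight fun x => ?_)) <;> simp
  refine ⟨(Equiv.sumCompl (fun x => b' x = true)).symm.trans
    ((e1.sumCongr e2).trans (Equiv.sumCompl (fun x => b x = true))), fun j => ?_⟩
  by_cases hj : b' j = true
  · rw [Equiv.trans_apply, Equiv.sumCompl_symm_apply_of_pos (p := fun x => b' x = true) hj]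
    simp only [Equiv.trans_apply, Equiv.sumCongr_apply, Sum.map_inl, Equiv.sumCompl_apply_inl]
    rw [hj]; exact ((e1 ⟨j, hj⟩).2).symm
  · rw [Equiv.trans_apply, Equiv.sumCompl_symm_apply_of_neg (p := fun x => b' x = true) hj]
    simp only [Equiv.trans_apply, Equiv.sumCongr_apply, Sum.map_inr, Equiv.sumCompl_apply_inr]
    have := (e2 ⟨j, hj⟩).2
    simp only [Bool.not_eq_true] at hj this ⊢
    rw [hj, this]

lemma card_filter_mem (d : ℕ) (s : Finset ℕ) (hs : ∀ m ∈ s, m < d) :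
    (Finset.univ.filter fun j : Fin d => (j : ℕ) ∈ s).card = s.card := by
  rw [← Finset.card_attachFin s hs]
  congr 1
  ext j
  simp [Finset.mem_attachFin]

lemma card_filter_lt (d k : ℕ) (hk : k ≤ d) :
    (Finset.univ.filter fun j : Fin d => (j : ℕ) < k).card = k := by
  have := card_filter_mem d (Finset.range k) (fun m hm => lt_of_lt_of_le (Finset.mem_range.mp hm) hk)
  simp only [Finset.mem_range] at this
  rw [this, Finset.card_range]

noncomputable def gfgmPi (d : ℕ) : Measure (Bool × Fin d → ℝ) :=
  Measure.pi fun _ => volume.restrict (Set.Icc (0 : ℝ) 1)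

instance gfgmNuProb : IsProbabilityMeasure (volume.restrict (Set.Icc (0 : ℝ) 1)) :=
  ⟨by simp [Real.volume_Icc]⟩

instance gfgmPiProb (d : ℕ) : IsProbabilityMeasure (gfgmPi d) := by
  unfold gfgmPi; infer_instance

noncomputable def gfgmS (d : ℕ) (p : ℝ) (u : Bool × Fin d → ℝ) (b : Fin d → Bool) : ℝ :=
  ∑ j, u (false, j) ^ (1 - p) * (if b j then u (true, j) else 1)

lemma gfgm_ae_mem (d : ℕ) : ∀ᵐ u ∂(gfgmPi d), ∀ i, u i ∈ Set.Icc (0 : ℝ) 1 := by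
  rw [ae_all_iff]
  intro i
  have h0 : (volume.restrict (Set.Icc (0 : ℝ) 1)) (Set.Icc (0 : ℝ) 1)ᶜ = 0 := by
    rw [Measure.restrict_apply (measurableSet_Icc.compl)]
    simp
  have := Measure.pi_eval_preimage_null
    (μ := fun _ : Bool × Fin d => volume.restrict (Set.Icc (0 : ℝ) 1)) (i := i) h0
  rw [ae_iff]
  unfold gfgmPi
  exact this

lemma gfgmS_term_mem (d : ℕ) (p : ℝ) (hp : p ∈ Set.Ioo (0:ℝ) 1) (u : Bool × Fin d → ℝ)
    (hu : ∀ i, u i ∈ Set.Icc (0 : ℝ) 1) (b : Fin d → Bool) (j : Fin d) :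
    u (false, j) ^ (1 - p) * (if b j then u (true, j) else 1) ∈ Set.Icc (0 : ℝ) 1 := by
  have h1 : (0:ℝ) ≤ 1 - p := by linarith [hp.2]
  have hf := hu (false, j)
  have ht := hu (true, j)
  have hA0 : 0 ≤ u (false, j) ^ (1 - p) := Real.rpow_nonneg hf.1 _
  have hA1 : u (false, j) ^ (1 - p) ≤ 1 := Real.rpow_le_one hf.1 hf.2 h1
  constructor
  · apply mul_nonneg hA0
    split <;> [exact ht.1; norm_num]
  · apply mul_le_one₀ hA1
    · split <;> [exact ht.1; norm_num]
    · split <;> [exact ht.2; norm_num]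

lemma gfgmS_mem (d : ℕ) (p : ℝ) (hp : p ∈ Set.Ioo (0:ℝ) 1) (u : Bool × Fin d → ℝ)
    (hu : ∀ i, u i ∈ Set.Icc (0 : ℝ) 1) (b : Fin d → Bool) :
    gfgmS d p u b ∈ Set.Icc (0 : ℝ) (d : ℝ) := by
  constructor
  · exact Finset.sum_nonneg fun j _ => (gfgmS_term_mem d p hp u hu b j).1
  · calc gfgmS d p u b ≤ ∑ _j : Fin d, (1:ℝ) :=
        Finset.sum_le_sum fun j _ => (gfgmS_term_mem d p hp u hu b j).2
    _ = d := by simp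

lemma measurable_gfgmS (d : ℕ) (p : ℝ) (hp : p ∈ Set.Ioo (0:ℝ) 1) (b : Fin d → Bool) :
    Measurable fun u : Bool × Fin d → ℝ => gfgmS d p u b := by
  have h1 : (0:ℝ) ≤ 1 - p := by linarith [hp.2]
  unfold gfgmS
  apply Finset.measurable_sum
  intro j _
  apply Measurable.mul
  · exact (Real.continuous_rpow_const h1).measurable.comp (measurable_pi_apply _)
  · split
    · exact measurable_pi_apply _
    · exact measurable_const

lemma gfgm_psi_cont {ψ : ℝ → ℝ} (hψ : ConvexOn ℝ Set.univ ψ) : Continuous ψ := by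
  have := hψ.continuousOn isOpen_univ
  rwa [continuousOn_univ] at this

lemma gfgm_bound {ψ : ℝ → ℝ} (hψ : ConvexOn ℝ Set.univ ψ) (d : ℕ) :
    ∃ M : ℝ, ∀ x ∈ Set.Icc (0:ℝ) (d:ℝ), ‖ψ x‖ ≤ M := by
  obtain ⟨M, hM⟩ := (isCompact_Icc (a := (0:ℝ)) (b := (d:ℝ))).exists_bound_of_continuousOn
    ((gfgm_psi_cont hψ).continuousOn)
  exact ⟨M, hM⟩

lemma gfgm_integrable {ψ : ℝ → ℝ} (hψ : ConvexOn ℝ Set.univ ψ) (d : ℕ) (p : ℝ)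
    (hp : p ∈ Set.Ioo (0:ℝ) 1) (b : Fin d → Bool) :
    Integrable (fun u => ψ (gfgmS d p u b)) (gfgmPi d) := by
  obtain ⟨M, hM⟩ := gfgm_bound hψ d
  refine Integrable.mono' (integrable_const M)
    (((gfgm_psi_cont hψ).measurable.comp (measurable_gfgmS d p hp b)).aestronglyMeasurable) ?_
  filter_upwards [gfgm_ae_mem d] with u hu
  exact hM _ (gfgmS_mem d p hp u hu b)

noncomputable def gfgmG (d : ℕ) (p : ℝ) (ψ : ℝ → ℝ) (b : Fin d → Bool) : ℝ :=
  ∫ u, ψ (gfgmS d p u b) ∂(gfgmPi d)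

-- symmetry: G depends only on the number of true coordinates
lemma gfgmG_perm (d : ℕ) (p : ℝ) (ψ : ℝ → ℝ) (b b' : Fin d → Bool) (σ : Fin d ≃ Fin d)
    (hσ : ∀ j, b' j = b (σ j)) : gfgmG d p ψ b' = gfgmG d p ψ b := by
  classical
  set τ : (Bool × Fin d) ≃ (Bool × Fin d) := (Equiv.refl Bool).prodCongr σ with hτ
  have mp : MeasurePreserving (MeasurableEquiv.piCongrLeft (fun _ => ℝ) τ.symm)
      (gfgmPi d) (gfgmPi d) :=
    measurePreserving_piCongrLeft (fun _ => volume.restrict (Set.Icc (0 : ℝ) 1)) τ.symm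
  have key : ∀ u : Bool × Fin d → ℝ,
      gfgmS d p ((MeasurableEquiv.piCongrLeft (fun _ => ℝ) τ.symm) u) b' = gfgmS d p u b := by
    intro u
    have happ : ∀ i, (MeasurableEquiv.piCongrLeft (fun _ => ℝ) τ.symm) u i = u (τ i) := by
      intro i
      simp [MeasurableEquiv.piCongrLeft, Equiv.piCongrLeft_apply_eq_cast]
    unfold gfgmS
    rw [show (∑ j, ((MeasurableEquiv.piCongrLeft (fun _ => ℝ) τ.symm) u) (false, j) ^ (1 - p) *
        (if b' j then ((MeasurableEquiv.piCongrLeft (fun _ => ℝ) τ.symm) u) (true, j) else 1))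
        = ∑ j, u (false, σ j) ^ (1 - p) * (if b' j then u (true, σ j) else 1) from
      Finset.sum_congr rfl fun j _ => by rw [happ, happ]; rfl]
    refine Fintype.sum_equiv σ _ _ fun j => ?_
    rw [hσ j]
  calc gfgmG d p ψ b' = ∫ u, ψ (gfgmS d p ((MeasurableEquiv.piCongrLeft (fun _ => ℝ) τ.symm) u) b')
        ∂(gfgmPi d) := (mp.integral_comp (MeasurableEquiv.piCongrLeft (fun _ => ℝ) τ.symm).measurableEmbedding _).symm
    _ = gfgmG d p ψ b := by unfold gfgmG; exact integral_congr_ae (Filter.Eventually.of_forall fun u => congrArg ψ (key u))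
noncomputable def gfgmg (d : ℕ) (p : ℝ) (ψ : ℝ → ℝ) (k : ℕ) : ℝ :=
  gfgmG d p ψ (fun j => decide ((j : ℕ) < k))

lemma gfgmG_card_eq (d : ℕ) (p : ℝ) (ψ : ℝ → ℝ) (b b' : Fin d → Bool)
    (h : (Finset.univ.filter fun j => b j = true).card
       = (Finset.univ.filter fun j => b' j = true).card) :
    gfgmG d p ψ b = gfgmG d p ψ b' := by
  obtain ⟨σ, hσ⟩ := exists_perm_of_card_eq b b' h
  exact (gfgmG_perm d p ψ b b' σ hσ).symm

lemma gfgm_pointwise {ψ : ℝ → ℝ} (hψ : ConvexOn ℝ Set.univ ψ) (d : ℕ) (p : ℝ)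
    (hp : p ∈ Set.Ioo (0:ℝ) 1) (m : ℕ) (hm1 : 1 ≤ m) (hmd : m < d)
    (u : Bool × Fin d → ℝ) (hu : ∀ i, u i ∈ Set.Icc (0 : ℝ) 1) :
    ψ (gfgmS d p u (fun j => decide ((j : ℕ) < m)))
      + ψ (gfgmS d p u (fun j => decide ((j : ℕ) < m - 1 ∨ (j : ℕ) = m)))
    ≤ ψ (gfgmS d p u (fun j => decide ((j : ℕ) < m - 1)))
      + ψ (gfgmS d p u (fun j => decide ((j : ℕ) < m + 1))) := by
  have hA : ∀ j : Fin d, 0 ≤ u (false, j) ^ (1 - p) :=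
    fun j => Real.rpow_nonneg (hu (false, j)).1 _
  have hT : ∀ j : Fin d, u (true, j) ≤ 1 := fun j => (hu (true, j)).2
  have hmul : ∀ j : Fin d, u (false, j) ^ (1 - p) * u (true, j) ≤ u (false, j) ^ (1 - p) := by
    intro j
    calc u (false, j) ^ (1 - p) * u (true, j) ≤ u (false, j) ^ (1 - p) * 1 :=
      mul_le_mul_of_nonneg_left (hT j) (hA j)
    _ = _ := mul_one _
  apply fourPoint hψ
  · -- S b2 ≤ S b1
    apply Finset.sum_le_sum
    intro j _
    rcases Nat.lt_trichotomy (j : ℕ) m with h | h | h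
    · simp [h, Nat.lt_succ_of_lt h]
    · simp [h, lt_irrefl, Nat.lt_succ_self]
      simpa using hmul j
    · have h1 : ¬ ((j:ℕ) < m) := by omega
      have h2 : ¬ ((j:ℕ) < m + 1) := by omega
      simp [h1, h2]
  · -- S b1 ≤ S b0
    apply Finset.sum_le_sum
    intro j _
    rcases Nat.lt_trichotomy (j : ℕ) (m - 1) with h | h | h
    · simp [h, show (j:ℕ) < m by omega]
    · simp [show ¬ ((j:ℕ) < m - 1) by omega, show (j:ℕ) < m by omega]
      simpa using hmul j
    · simp [show ¬ ((j:ℕ) < m - 1) by omega, show ¬ ((j:ℕ) < m) by omega]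
  · -- sum equality
    unfold gfgmS
    rw [← Finset.sum_add_distrib, ← Finset.sum_add_distrib]
    apply Finset.sum_congr rfl
    intro j _
    rcases Nat.lt_trichotomy (j : ℕ) (m - 1) with h | h | h
    · simp [h, show (j:ℕ) < m by omega, show (j:ℕ) < m + 1 by omega]
    · have he : ¬ ((j:ℕ) = m) := by omega
      simp [show ¬ ((j:ℕ) < m - 1) by omega, show (j:ℕ) < m by omega,
        show (j:ℕ) < m + 1 by omega, he]
      ring
    · rcases Nat.lt_trichotomy (j : ℕ) m with h' | h' | h'
      · omega
      · simp [show ¬ ((j:ℕ) < m - 1) by omega, show ¬ ((j:ℕ) < m) by omega,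
          show (j:ℕ) < m + 1 by omega, h', show ¬ (m < m - 1) by omega,
          show ¬ (m < m) by omega, show m < m + 1 by omega]
        try ring
      · simp [show ¬ ((j:ℕ) < m - 1) by omega, show ¬ ((j:ℕ) < m) by omega,
          show ¬ ((j:ℕ) < m + 1) by omega, show ¬ ((j:ℕ) = m) by omega]

lemma gfgm_c_nonneg {ψ : ℝ → ℝ} (hψ : ConvexOn ℝ Set.univ ψ) (d : ℕ) (p : ℝ)
    (hp : p ∈ Set.Ioo (0:ℝ) 1) (m : ℕ) (hm1 : 1 ≤ m) (hmd : m < d) :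
    0 ≤ gfgmg d p ψ (m + 1) + gfgmg d p ψ (m - 1) - 2 * gfgmg d p ψ m := by
  classical
  have h1' : gfgmG d p ψ (fun j => decide ((j : ℕ) < m - 1 ∨ (j : ℕ) = m)) = gfgmg d p ψ m := by
    apply gfgmG_card_eq
    have hr : (Finset.univ.filter fun j : Fin d =>
        (decide ((j : ℕ) < m - 1 ∨ (j : ℕ) = m)) = true)
        = Finset.univ.filter fun j : Fin d => (j:ℕ) ∈ insert m (Finset.range (m-1)) := by
      apply Finset.filter_congr; intro j _
      simp only [decide_eq_true_eq, Finset.mem_insert, Finset.mem_range]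
      constructor
      · rintro (h | h) <;> simp [h]
      · rintro (h | h) <;> simp [h]
    have hl : (Finset.univ.filter fun j : Fin d => (decide ((j : ℕ) < m)) = true)
        = Finset.univ.filter fun j : Fin d => (j:ℕ) < m := by
      apply Finset.filter_congr; intro j _; simp
    rw [hr, hl, card_filter_lt d m (le_of_lt hmd),
      card_filter_mem d _ (by intro x hx; simp at hx; omega)]
    rw [Finset.card_insert_of_notMem (by simp)]
    rw [Finset.card_range]
    omega
  have i0 := gfgm_integrable hψ d p hp (fun j => decide ((j : ℕ) < m - 1))
  have i1 := gfgm_integrable hψ d p hp (fun j => decide ((j : ℕ) < m))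
  have i1' := gfgm_integrable hψ d p hp (fun j => decide ((j : ℕ) < m - 1 ∨ (j : ℕ) = m))
  have i2 := gfgm_integrable hψ d p hp (fun j => decide ((j : ℕ) < m + 1))
  have key : gfgmG d p ψ (fun j => decide ((j : ℕ) < m))
      + gfgmG d p ψ (fun j => decide ((j : ℕ) < m - 1 ∨ (j : ℕ) = m))
      ≤ gfgmG d p ψ (fun j => decide ((j : ℕ) < m - 1))
      + gfgmG d p ψ (fun j => decide ((j : ℕ) < m + 1)) := by
    unfold gfgmG
    rw [← integral_add i1 i1', ← integral_add i0 i2]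
    apply integral_mono_ae (i1.add i1') (i0.add i2)
    filter_upwards [gfgm_ae_mem d] with u hu
    exact gfgm_pointwise hψ d p hp m hm1 hmd u hu
  have e0 : gfgmG d p ψ (fun j => decide ((j : ℕ) < m - 1)) = gfgmg d p ψ (m - 1) := rfl
  have e2 : gfgmG d p ψ (fun j => decide ((j : ℕ) < m + 1)) = gfgmg d p ψ (m + 1) := rfl
  have e1 : gfgmG d p ψ (fun j => decide ((j : ℕ) < m)) = gfgmg d p ψ m := rfl
  rw [e0, e2, e1, h1'] at key
  linarith
noncomputable def gfgmPhi (d : ℕ) (p : ℝ) (ψ : ℝ → ℝ) : ℝ → ℝ := fun x =>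
  gfgmg d p ψ 0 + (gfgmg d p ψ 1 - gfgmg d p ψ 0) * x
    + ∑ m ∈ Finset.Ico 1 d,
        (gfgmg d p ψ (m + 1) + gfgmg d p ψ (m - 1) - 2 * gfgmg d p ψ m) * max (x - (m : ℝ)) 0

lemma gfgmPhi_convex {ψ : ℝ → ℝ} (hψ : ConvexOn ℝ Set.univ ψ) (d : ℕ) (p : ℝ)
    (hp : p ∈ Set.Ioo (0:ℝ) 1) : ConvexOn ℝ Set.univ (gfgmPhi d p ψ) := by
  unfold gfgmPhi
  apply convexOn_pl
  intro m hm
  rw [Finset.mem_Ico] at hm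
  exact gfgm_c_nonneg hψ d p hp m hm.1 hm.2

lemma gfgmPhi_nat (d : ℕ) (p : ℝ) (ψ' : ℝ → ℝ) (k : ℕ) (hk : k ≤ d) :
    gfgmPhi d p ψ' (k : ℝ) = gfgmg d p ψ' k := by
  unfold gfgmPhi
  have hsub : Finset.Ico 1 k ⊆ Finset.Ico 1 d := Finset.Ico_subset_Ico le_rfl hk
  rw [← Finset.sum_subset hsub (fun m hm hmk => ?_)]
  · have hcg : ∀ m ∈ Finset.Ico 1 k,
        (gfgmg d p ψ' (m + 1) + gfgmg d p ψ' (m - 1) - 2 * gfgmg d p ψ' m) * max ((k:ℝ) - m) 0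
        = (gfgmg d p ψ' (m + 1) + gfgmg d p ψ' (m - 1) - 2 * gfgmg d p ψ' m) * ((k:ℝ) - m) := by
      intro m hm
      rw [Finset.mem_Ico] at hm
      rw [max_eq_left (by
        have : (m:ℝ) ≤ (k:ℝ) := by exact_mod_cast le_of_lt hm.2
        linarith)]
    rw [Finset.sum_congr rfl hcg]
    exact tele1 (gfgmg d p ψ') k
  · rw [Finset.mem_Ico] at hm hmk
    have : ¬ (m < k) := fun h => hmk ⟨hm.1, h⟩
    rw [max_eq_right (by
      have : (k:ℝ) ≤ (m:ℝ) := by exact_mod_cast Nat.le_of_not_lt this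
      linarith), mul_zero]
lemma gfgm_side
    {Ω : Type*} [MeasurableSpace Ω] (μ : Measure Ω) [IsProbabilityMeasure μ]
    (d : ℕ) (p : ℝ) (hp : p ∈ Set.Ioo (0 : ℝ) 1)
    (U : Bool × Fin d → Ω → ℝ) (hUm : ∀ i, Measurable (U i))
    (hUunif : ∀ i, Measure.map (U i) μ = volume.restrict (Set.Icc (0 : ℝ) 1))
    (hUindep : iIndepFun U μ)
    (I : Ω → Fin d → Bool) (hIm : Measurable I)
    (hUI : IndepFun (fun ω => fun i => U i ω) I μ)
    {ψ : ℝ → ℝ} (hψ : ConvexOn ℝ Set.univ ψ) :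
    (∫ ω, ψ (∑ j, U (false, j) ω ^ (1 - p) * (if I ω j then U (true, j) ω else 1)) ∂μ)
      = ∫ ω, gfgmPhi d p ψ (∑ j, if I ω j then (1 : ℝ) else 0) ∂μ := by
  classical
  set V : Ω → (Bool × Fin d → ℝ) := fun ω i => U i ω with hV
  have hVm : Measurable V := measurable_pi_lambda _ hUm
  have hmapV : μ.map V = gfgmPi d := by
    unfold gfgmPi
    refine (Measure.pi_eq fun s hs => ?_).symm
    rw [Measure.map_apply hVm (MeasurableSet.univ_pi hs)]
    have hpre : V ⁻¹' (Set.univ.pi s) = ⋂ i ∈ (Finset.univ : Finset (Bool × Fin d)), U i ⁻¹' s i := by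
      ext ω; simp [hV, Set.mem_univ_pi]
    rw [hpre, hUindep.measure_inter_preimage_eq_mul Finset.univ (fun i _ => hs i)]
    exact Finset.prod_congr rfl fun i _ => by rw [← hUunif i, Measure.map_apply (hUm i) (hs i)]
  have hjoint : μ.map (fun ω => (V ω, I ω)) = (gfgmPi d).prod (μ.map I) := by
    rw [← hmapV]
    exact (indepFun_iff_map_prod_eq_prod_map_map hVm.aemeasurable hIm.aemeasurable).mp hUI
  haveI : IsProbabilityMeasure (μ.map I) := Measure.isProbabilityMeasure_map hIm.aemeasurable
  have hψm : Measurable ψ := (gfgm_psi_cont hψ).measurable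
  have hSm : Measurable (fun z : (Bool × Fin d → ℝ) × (Fin d → Bool) => gfgmS d p z.1 z.2) := by
    unfold gfgmS
    apply Finset.measurable_sum
    intro j _
    refine Measurable.mul ?_ ?_
    · exact (Real.continuous_rpow_const (by linarith [hp.2.le])).measurable.comp
        ((measurable_pi_apply _).comp measurable_fst)
    · have hmeasz : Measurable fun z : (Bool × Fin d → ℝ) × (Fin d → Bool) => z.2 j :=
        (measurable_pi_apply j).comp measurable_snd
      have hset := hmeasz (measurableSet_singleton true)
      exact Measurable.ite hset ((measurable_pi_apply _).comp measurable_fst) measurable_const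
  have hcompm : Measurable (fun z : (Bool × Fin d → ℝ) × (Fin d → Bool) => ψ (gfgmS d p z.1 z.2)) :=
    hψm.comp hSm
  have intprod : Integrable (fun z : (Bool × Fin d → ℝ) × (Fin d → Bool) => ψ (gfgmS d p z.1 z.2))
      ((gfgmPi d).prod (μ.map I)) := by
    obtain ⟨M, hM⟩ := gfgm_bound hψ d
    have hQ : MeasurableSet {u : Bool × Fin d → ℝ | ∀ i, u i ∈ Set.Icc (0:ℝ) 1} := by
      rw [Set.setOf_forall]
      exact MeasurableSet.iInter fun i => (measurable_pi_apply i) measurableSet_Icc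
    have h1 : ((gfgmPi d).prod (μ.map I)).map Prod.fst = gfgmPi d := by
      rw [Measure.map_fst_prod]; simp
    have h2 := gfgm_ae_mem d
    rw [← h1] at h2
    have haeprod : ∀ᵐ z ∂((gfgmPi d).prod (μ.map I)), ∀ i, z.1 i ∈ Set.Icc (0:ℝ) 1 :=
      (ae_map_iff measurable_fst.aemeasurable hQ).mp h2
    refine Integrable.mono' (integrable_const M) hcompm.aestronglyMeasurable ?_
    filter_upwards [haeprod] with z hz
    exact hM _ (gfgmS_mem d p hp z.1 hz z.2)
  have hGphi : ∀ b : Fin d → Bool, gfgmG d p ψ b = gfgmPhi d p ψ (∑ j, if b j then (1:ℝ) else 0) := by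
    intro b
    set k := (Finset.univ.filter fun j => b j = true).card with hkdef
    have hk : k ≤ d := le_trans (Finset.card_filter_le _ _) (by simp)
    have hsum : (∑ j, if b j then (1:ℝ) else 0) = (k:ℝ) := by
      rw [Finset.sum_boole (fun j => b j = true) Finset.univ, hkdef]
    rw [hsum, gfgmPhi_nat d p ψ k hk]
    apply gfgmG_card_eq
    have hpred : (Finset.univ.filter fun j : Fin d => (decide ((j:ℕ) < k)) = true)
        = Finset.univ.filter fun j : Fin d => (j:ℕ) < k := by
      apply Finset.filter_congr; intro j _; simp
    rw [hpred, card_filter_lt d k hk]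
  calc (∫ ω, ψ (∑ j, U (false, j) ω ^ (1 - p) * (if I ω j then U (true, j) ω else 1)) ∂μ)
      = ∫ z : (Bool × Fin d → ℝ) × (Fin d → Bool), ψ (gfgmS d p z.1 z.2)
          ∂((gfgmPi d).prod (μ.map I)) := by
        rw [← hjoint, integral_map (hVm.prodMk hIm).aemeasurable
          hcompm.aestronglyMeasurable]
        rfl
    _ = ∫ b, ∫ u, ψ (gfgmS d p u b) ∂(gfgmPi d) ∂(μ.map I) := integral_prod_symm _ intprod
    _ = ∫ b, gfgmPhi d p ψ (∑ j, if b j then (1:ℝ) else 0) ∂(μ.map I) := by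
        apply integral_congr_ae
        filter_upwards with b
        exact hGphi b
    _ = ∫ ω, gfgmPhi d p ψ (∑ j, if I ω j then (1:ℝ) else 0) ∂μ := by
        rw [integral_map hIm.aemeasurable ((measurable_of_countable _).aestronglyMeasurable)]
/-- convex order of the Bernoulli sums transfers to convex order of the
sums of components of the corresponding uniform vectors with GFGM(p) copulas. -/
theorem gfgm_sum_convex_order
    {Ω : Type*} [MeasurableSpace Ω] (μ : Measure Ω) [IsProbabilityMeasure μ]
    {Ω' : Type*} [MeasurableSpace Ω'] (μ' : Measure Ω') [IsProbabilityMeasure μ']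
    (d : ℕ) (hd : 1 ≤ d) (p : ℝ) (hp : p ∈ Set.Ioo (0 : ℝ) 1)
    (U : Bool × Fin d → Ω → ℝ) (hUm : ∀ i, Measurable (U i))
    (hUunif : ∀ i, Measure.map (U i) μ = volume.restrict (Set.Icc (0 : ℝ) 1))
    (hUindep : iIndepFun U μ)
    (I : Ω → Fin d → Bool) (hIm : Measurable I)
    (hIp : ∀ j, μ {ω | I ω j = true} = ENNReal.ofReal p)
    (hUI : IndepFun (fun ω => fun i => U i ω) I μ)
    (U' : Bool × Fin d → Ω' → ℝ) (hU'm : ∀ i, Measurable (U' i))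
    (hU'unif : ∀ i, Measure.map (U' i) μ' = volume.restrict (Set.Icc (0 : ℝ) 1))
    (hU'indep : iIndepFun U' μ')
    (I' : Ω' → Fin d → Bool) (hI'm : Measurable I')
    (hI'p : ∀ j, μ' {ω | I' ω j = true} = ENNReal.ofReal p)
    (hU'I' : IndepFun (fun ω => fun i => U' i ω) I' μ')
    -- the Bernoulli sums are convexly ordered
    (hcx : ∀ φ : ℝ → ℝ, ConvexOn ℝ Set.univ φ →
      (∫ ω, φ (∑ j, if I ω j then (1 : ℝ) else 0) ∂μ)
        ≤ ∫ ω, φ (∑ j, if I' ω j then (1 : ℝ) else 0) ∂μ') :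
    -- then the GFGM uniform sums are convexly ordered
    ∀ ψ : ℝ → ℝ, ConvexOn ℝ Set.univ ψ →
      Integrable (fun ω =>
        ψ (∑ j, U (false, j) ω ^ (1 - p) * (if I ω j then U (true, j) ω else 1))) μ →
      Integrable (fun ω =>
        ψ (∑ j, U' (false, j) ω ^ (1 - p) * (if I' ω j then U' (true, j) ω else 1))) μ' →
      (∫ ω, ψ (∑ j, U (false, j) ω ^ (1 - p) * (if I ω j then U (true, j) ω else 1)) ∂μ)
        ≤ ∫ ω, ψ (∑ j, U' (false, j) ω ^ (1 - p) * (if I' ω j then U' (true, j) ω else 1)) ∂μ' := by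
  intro ψ hψ _ _
  rw [gfgm_side μ d p hp U hUm hUunif hUindep I hIm hUI hψ,
    gfgm_side μ' d p hp U' hU'm hU'unif hU'indep I' hI'm hU'I' hψ]
  exact hcx _ (gfgmPhi_convex hψ d p hp)
end
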